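/- arXiv:1212.1379 — 2 statements merged into one kernel-verified Lean document; each statement's English description precedes it below -/
import Mathlib

section
/- Geometric contraction of the thresholds on the pre-fixed-point region: for every m ≥ 1, every k ≥ m, and all y, z ∈ [0, ξ_m], one has |g_k(y) − g_k(z)| ≤ 3^{m−k}·|y − z|. -/
open MeasureTheory Set Filter

/-- The value functions of the optimal online alternating-subsequence selection
problem: `v 0 y = 0` and
`v (k+1) y = y * v k y + ∫ x in y..1, max (v k y) (1 + v k (1 - x))`. -/
noncomputable def v : ℕ → ℝ → ℝ
  | 0, _ => 0
  | (k+1), y => y * v k y + ∫ x in y..(1:ℝ), max (v k y) (1 + v k (1 - x))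

/-- The optimal threshold function:
`g k y = inf {x ∈ [y,1] : v (k-1) y ≤ 1 + v (k-1) (1-x)}`. -/
noncomputable def g (k : ℕ) (y : ℝ) : ℝ :=
  sInf {x : ℝ | x ∈ Set.Icc y 1 ∧ v (k-1) y ≤ 1 + v (k-1) (1 - x)}

/-- The minimal fixed point `ξ k = inf {y ∈ [0,1] : g k y = y}`. -/
noncomputable def xi (k : ℕ) : ℝ :=
  sInf {y : ℝ | y ∈ Set.Icc (0:ℝ) 1 ∧ g k y = y}

/-! ### Generic integral helpers -/

lemma pair_null (a b : ℝ) : (volume : Measure ℝ) {a, b} = 0 :=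
  (Set.Countable.insert a (countable_singleton b)).measure_zero _

lemma integral_nonneg_Ioo {f : ℝ → ℝ} {a b : ℝ} (hab : a ≤ b)
    (h : ∀ x ∈ Ioo a b, 0 ≤ f x) : 0 ≤ ∫ x in a..b, f x := by
  apply intervalIntegral.integral_nonneg_of_ae_restrict hab
  rw [Filter.EventuallyLE, ae_restrict_iff' measurableSet_Icc]
  refine (ae_iff.2 ?_)
  refine measure_mono_null (fun x hx => ?_) (pair_null a b)
  simp only [Set.mem_setOf_eq, Classical.not_imp] at hx
  rcases hx with ⟨hx1, hx2⟩
  by_contra hne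
  simp only [Set.mem_insert_iff, Set.mem_singleton_iff] at hne
  push_neg at hne
  exact hx2 (h x ⟨lt_of_le_of_ne hx1.1 (Ne.symm hne.1), lt_of_le_of_ne hx1.2 hne.2⟩)

lemma integral_nonpos_Ioo {f : ℝ → ℝ} {a b : ℝ} (hab : a ≤ b)
    (h : ∀ x ∈ Ioo a b, f x ≤ 0) : (∫ x in a..b, f x) ≤ 0 := by
  have := integral_nonneg_Ioo (f := fun x => -f x) hab (fun x hx => neg_nonneg.2 (h x hx))
  rw [intervalIntegral.integral_neg] at this
  linarith

/-- interval integral of an antitone function is bounded by rectangle bounds -/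
lemma integral_le_of_antitone {f : ℝ → ℝ} {a b : ℝ} (hab : a ≤ b)
    (hint : IntervalIntegrable f volume a b)
    (h : ∀ x ∈ Icc a b, f x ≤ f a) : (∫ x in a..b, f x) ≤ (b - a) * f a := by
  have := intervalIntegral.integral_mono_on hab hint (intervalIntegrable_const (c := f a)) h
  simpa using this

lemma le_integral_of_antitone {f : ℝ → ℝ} {a b : ℝ} (hab : a ≤ b)
    (hint : IntervalIntegrable f volume a b)
    (h : ∀ x ∈ Icc a b, f b ≤ f x) : (b - a) * f b ≤ ∫ x in a..b, f x := by
  have := intervalIntegral.integral_mono_on hab (intervalIntegrable_const (c := f b)) hint h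
  simpa using this

/-! ### The `Nice` bundle : basic regularity of `v n` on `[0,1]` -/

structure Nice (n : ℕ) : Prop where
  mono : ∀ ⦃y z : ℝ⦄, 0 ≤ y → y ≤ z → z ≤ 1 → v n z ≤ v n y
  nonneg : ∀ ⦃y : ℝ⦄, 0 ≤ y → y ≤ 1 → 0 ≤ v n y
  lip : ∀ ⦃y z : ℝ⦄, 0 ≤ y → y ≤ z → z ≤ 1 → v n y - v n z ≤ (4:ℝ)^(n+1) * (z - y)

lemma nice0 : Nice 0 := by
  refine ⟨?_, ?_, ?_⟩
  · intro y z _ _ _; simp [v]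
  · intro y _ _; simp [v]
  · intro y z _ h2 _; simp only [v]
    simpa using mul_nonneg (by positivity : (0:ℝ) ≤ 4^(0+1)) (by linarith : (0:ℝ) ≤ z - y)

lemma Nice.contOn {n : ℕ} (hn : Nice n) : ContinuousOn (v n) (Icc 0 1) := by
  have : LipschitzOnWith ((4:ℝ)^(n+1)).toNNReal (v n) (Icc 0 1) := by
    rw [lipschitzOnWith_iff_dist_le_mul]
    have hc : (((4:ℝ)^(n+1)).toNNReal : ℝ) = (4:ℝ)^(n+1) :=
      Real.coe_toNNReal _ (by positivity)
    intro x hx y hy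
    rw [hc, Real.dist_eq, Real.dist_eq]
    rcases le_total x y with h | h
    · have h1 := hn.lip hx.1 h hy.2
      have h2 := hn.mono hx.1 h hy.2
      rw [abs_of_nonneg (by linarith), abs_of_nonpos (by linarith), neg_sub]
      linarith
    · have h1 := hn.lip hy.1 h hx.2
      have h2 := hn.mono hy.1 h hx.2
      rw [abs_of_nonpos (by linarith), abs_of_nonneg (by linarith), neg_sub]
      linarith
  exact this.continuousOn

lemma Nice.intOn {n : ℕ} (hn : Nice n) {a b : ℝ} (ha : a ∈ Icc (0:ℝ) 1) (hb : b ∈ Icc (0:ℝ) 1) :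
    IntervalIntegrable (v n) volume a b := by
  apply ContinuousOn.intervalIntegrable
  exact hn.contOn.mono (Set.uIcc_subset_Icc ha hb)


/-! ### The threshold set and its basic properties -/

/-- The acceptance set defining `g (n+1) y`. -/
def Sset (n : ℕ) (y : ℝ) : Set ℝ := {x : ℝ | x ∈ Icc y 1 ∧ v n y ≤ 1 + v n (1 - x)}

lemma g_succ_eq (n : ℕ) (y : ℝ) : g (n+1) y = sInf (Sset n y) := rfl

lemma S_one_mem {n : ℕ} (hn : Nice n) {y : ℝ} (hy : y ∈ Icc (0:ℝ) 1) : 1 ∈ Sset n y := by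
  refine ⟨⟨hy.2, le_refl 1⟩, ?_⟩
  have := hn.mono (le_refl 0) hy.1 hy.2
  simp only [sub_self]
  linarith

lemma S_bddBelow (n : ℕ) (y : ℝ) : BddBelow (Sset n y) := ⟨y, fun x hx => hx.1.1⟩

lemma S_upclosed {n : ℕ} (hn : Nice n) {y : ℝ} (hy : y ∈ Icc (0:ℝ) 1) {x1 x2 : ℝ}
    (h1 : x1 ∈ Sset n y) (h12 : x1 ≤ x2) (h2 : x2 ≤ 1) : x2 ∈ Sset n y := by
  refine ⟨⟨le_trans h1.1.1 h12, h2⟩, le_trans h1.2 ?_⟩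
  have : v n (1 - x1) ≤ v n (1 - x2) + 0 := by
    have := hn.mono (by linarith : (0:ℝ) ≤ 1 - x2) (by linarith : 1 - x2 ≤ 1 - x1)
      (by have := hy.1; have := h1.1.1; linarith : 1 - x1 ≤ 1)
    linarith
  linarith

lemma S_closed {n : ℕ} (hn : Nice n) {y : ℝ} (hy : y ∈ Icc (0:ℝ) 1) : IsClosed (Sset n y) := by
  have : Sset n y = Icc y 1 ∩ (fun x => v n (1 - x)) ⁻¹' (Ici (v n y - 1)) := by
    ext x
    simp only [Sset, Set.mem_setOf_eq, Set.mem_inter_iff, Set.mem_preimage, Set.mem_Ici]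
    constructor
    · rintro ⟨h1, h2⟩; exact ⟨h1, by linarith⟩
    · rintro ⟨h1, h2⟩; exact ⟨h1, by linarith⟩
  rw [this]
  apply ContinuousOn.preimage_isClosed_of_isClosed _ isClosed_Icc isClosed_Ici
  apply hn.contOn.comp (by fun_prop : ContinuousOn (fun x : ℝ => 1 - x) (Icc y 1))
  intro x hx
  exact ⟨show (0:ℝ) ≤ 1 - x by linarith [hx.1, hx.2, hy.1],
    show (1:ℝ) - x ≤ 1 by linarith [hx.1, hy.1]⟩

lemma g_mem {n : ℕ} (hn : Nice n) {y : ℝ} (hy : y ∈ Icc (0:ℝ) 1) : g (n+1) y ∈ Sset n y := by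
  rw [g_succ_eq]
  exact (S_closed hn hy).csInf_mem ⟨1, S_one_mem hn hy⟩ (S_bddBelow n y)

lemma g_mem_Icc {n : ℕ} (hn : Nice n) {y : ℝ} (hy : y ∈ Icc (0:ℝ) 1) : g (n+1) y ∈ Icc y 1 :=
  (g_mem hn hy).1

lemma g_cond {n : ℕ} (hn : Nice n) {y : ℝ} (hy : y ∈ Icc (0:ℝ) 1) :
    v n y ≤ 1 + v n (1 - g (n+1) y) := (g_mem hn hy).2

lemma g_le_of_mem {n : ℕ} {y x : ℝ} (hx : x ∈ Sset n y) : g (n+1) y ≤ x :=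
  csInf_le (S_bddBelow n y) hx

lemma not_cond_of_lt_g {n : ℕ} (hn : Nice n) {y x : ℝ} (hy : y ∈ Icc (0:ℝ) 1)
    (hxy : y ≤ x) (hx : x < g (n+1) y) :
    1 + v n (1 - x) < v n y := by
  have hx1 : x ≤ 1 := le_trans hx.le (g_mem hn hy).1.2
  have := notMem_of_lt_csInf (s := Sset n y) hx (S_bddBelow n y)
  simp only [Sset, Set.mem_setOf_eq, Set.mem_Icc, not_and, not_le] at this
  exact this ⟨hxy, hx1⟩

lemma cond_of_gt_g {n : ℕ} (hn : Nice n) {y x : ℝ} (hy : y ∈ Icc (0:ℝ) 1)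
    (hgx : g (n+1) y < x) (hx1 : x ≤ 1) : x ∈ Sset n y :=
  S_upclosed hn hy (g_mem hn hy) (le_of_lt hgx) hx1

/-! ### Integrability helpers and the split formula -/

lemma comp_sub_contOn {n : ℕ} (hn : Nice n) :
    ContinuousOn (fun x : ℝ => v n (1 - x)) (Icc 0 1) := by
  apply hn.contOn.comp (by fun_prop : ContinuousOn (fun x : ℝ => 1 - x) (Icc (0:ℝ) 1))
  intro x hx
  exact ⟨show (0:ℝ) ≤ 1 - x by linarith [hx.1, hx.2],
    show (1:ℝ) - x ≤ 1 by linarith [hx.1, hx.2]⟩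

lemma comp_sub_int {n : ℕ} (hn : Nice n) {a b : ℝ} (ha : a ∈ Icc (0:ℝ) 1)
    (hb : b ∈ Icc (0:ℝ) 1) : IntervalIntegrable (fun x : ℝ => v n (1 - x)) volume a b :=
  ((comp_sub_contOn hn).mono (Set.uIcc_subset_Icc ha hb)).intervalIntegrable

lemma maxF_int {n : ℕ} (hn : Nice n) (c : ℝ) {a b : ℝ} (ha : a ∈ Icc (0:ℝ) 1)
    (hb : b ∈ Icc (0:ℝ) 1) :
    IntervalIntegrable (fun x : ℝ => max c (1 + v n (1 - x))) volume a b := by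
  have : ContinuousOn (fun x : ℝ => max c (1 + v n (1 - x))) (Icc 0 1) :=
    ContinuousOn.sup continuousOn_const (continuousOn_const.add (comp_sub_contOn hn))
  exact (this.mono (Set.uIcc_subset_Icc ha hb)).intervalIntegrable

lemma v_succ_split {n : ℕ} (hn : Nice n) {y : ℝ} (hy : y ∈ Icc (0:ℝ) 1) :
    v (n+1) y = g (n+1) y * v n y + (1 - g (n+1) y)
      + ∫ u in (0:ℝ)..(1 - g (n+1) y), v n u := by
  obtain ⟨⟨hyA, hA1⟩, hcondA⟩ := g_mem hn hy
  set A := g (n+1) y with hA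
  have hA0 : (0:ℝ) ≤ A := le_trans hy.1 hyA
  have hmemA : A ∈ Icc (0:ℝ) 1 := ⟨hA0, hA1⟩
  have h1mem : (1:ℝ) ∈ Icc (0:ℝ) 1 := by constructor <;> norm_num
  have hsplit : (∫ x in y..(1:ℝ), max (v n y) (1 + v n (1 - x)))
      = (∫ x in y..A, max (v n y) (1 + v n (1 - x)))
        + ∫ x in A..(1:ℝ), max (v n y) (1 + v n (1 - x)) :=
    (intervalIntegral.integral_add_adjacent_intervals
      (maxF_int hn _ hy hmemA) (maxF_int hn _ hmemA h1mem)).symm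
  have h1 : (∫ x in y..A, max (v n y) (1 + v n (1 - x))) = (A - y) * v n y := by
    have e : (∫ x in y..A, max (v n y) (1 + v n (1 - x)))
        = ∫ _x in y..A, v n y := by
      apply intervalIntegral.integral_congr_ae'
      · rw [ae_iff]
        refine measure_mono_null (fun x hx => ?_) (pair_null A A)
        simp only [Set.mem_setOf_eq, Classical.not_imp] at hx
        obtain ⟨hx1, hx2⟩ := hx
        simp only [Set.mem_insert_iff, Set.mem_singleton_iff, or_self]
        by_contra hne
        have hxA : x < A := lt_of_le_of_ne hx1.2 hne
        have := not_cond_of_lt_g hn hy (le_of_lt hx1.1) hxA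
        exact hx2 (max_eq_left (by linarith))
      · refine ae_of_all _ (fun x hx => absurd hx ?_)
        simp only [Set.mem_Ioc, not_and, not_le]
        intro h; linarith
    rw [e, intervalIntegral.integral_const, smul_eq_mul]
  have h2 : (∫ x in A..(1:ℝ), max (v n y) (1 + v n (1 - x)))
      = (1 - A) + ∫ u in (0:ℝ)..(1 - A), v n u := by
    have e1 : (∫ x in A..(1:ℝ), max (v n y) (1 + v n (1 - x)))
        = ∫ x in A..(1:ℝ), (1 + v n (1 - x)) := by
      apply intervalIntegral.integral_congr
      intro x hx
      rw [Set.uIcc_of_le hA1] at hx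
      rcases eq_or_lt_of_le hx.1 with he | hlt
      · rw [← he]; exact max_eq_right hcondA
      · exact max_eq_right (cond_of_gt_g hn hy hlt hx.2).2
    have e2 : (∫ x in A..(1:ℝ), (1 + v n (1 - x)))
        = (∫ _x in A..(1:ℝ), (1:ℝ)) + ∫ x in A..(1:ℝ), v n (1 - x) :=
      intervalIntegral.integral_add intervalIntegrable_const (comp_sub_int hn hmemA h1mem)
    have e3 : (∫ _x in A..(1:ℝ), (1:ℝ)) = 1 - A := by
      rw [intervalIntegral.integral_const, smul_eq_mul, mul_one]
    have e4 : (∫ x in A..(1:ℝ), v n (1 - x)) = ∫ u in (0:ℝ)..(1 - A), v n u := by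
      have h := intervalIntegral.integral_comp_sub_left (a := A) (b := (1:ℝ)) (v n) 1
      rw [show (1:ℝ) - 1 = 0 by norm_num] at h
      exact h
    rw [e1, e2, e3, e4]
  show y * v n y + (∫ x in y..(1:ℝ), max (v n y) (1 + v n (1 - x))) = _
  rw [hsplit, h1, h2]
  ring

/-! ### Fixed points of `g`, the identity, and `ξ` -/

lemma g_fixed_iff {n : ℕ} (hn : Nice n) {y : ℝ} (hy : y ∈ Icc (0:ℝ) 1) :
    g (n+1) y = y ↔ v n y ≤ 1 + v n (1 - y) := by
  constructor
  · intro h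
    have := g_cond hn hy
    rwa [h] at this
  · intro h
    have hyS : y ∈ Sset n y := ⟨⟨le_refl y, hy.2⟩, h⟩
    exact le_antisymm (g_le_of_mem hyS) (g_mem hn hy).1.1

/-- The fixed-point set defining `xi (n+1)`. -/
def Tset (n : ℕ) : Set ℝ := {y : ℝ | y ∈ Icc (0:ℝ) 1 ∧ g (n+1) y = y}

lemma xi_succ_eq (n : ℕ) : xi (n+1) = sInf (Tset n) := rfl

lemma T_one {n : ℕ} (hn : Nice n) : 1 ∈ Tset n := by
  have h1 : (1:ℝ) ∈ Icc (0:ℝ) 1 := by constructor <;> norm_num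
  refine ⟨h1, (g_fixed_iff hn h1).2 ?_⟩
  have := hn.mono (le_refl 0) (by norm_num : (0:ℝ) ≤ 1) (le_refl 1)
  simp only [sub_self]
  linarith

lemma T_bddBelow (n : ℕ) : BddBelow (Tset n) := ⟨0, fun y hy => hy.1.1⟩

lemma T_upclosed {n : ℕ} (hn : Nice n) {y1 y2 : ℝ} (h1 : y1 ∈ Tset n) (h12 : y1 ≤ y2)
    (h2 : y2 ≤ 1) : y2 ∈ Tset n := by
  have hy1 := h1.1
  have hmem2 : y2 ∈ Icc (0:ℝ) 1 := ⟨le_trans hy1.1 h12, h2⟩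
  refine ⟨hmem2, (g_fixed_iff hn hmem2).2 ?_⟩
  have e1 := (g_fixed_iff hn hy1).1 h1.2
  have e2 : v n y2 ≤ v n y1 := hn.mono hy1.1 h12 h2
  have e3 : v n (1 - y1) ≤ v n (1 - y2) :=
    hn.mono (by linarith : (0:ℝ) ≤ 1 - y2) (by linarith) (by linarith [hy1.1])
  linarith

lemma xi_mem_Icc {n : ℕ} (hn : Nice n) : xi (n+1) ∈ Icc (0:ℝ) 1 := by
  rw [xi_succ_eq]
  constructor
  · exact le_csInf ⟨1, T_one hn⟩ (fun y hy => hy.1.1)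
  · exact csInf_le (T_bddBelow n) (T_one hn)

lemma xi_fixed {n : ℕ} (hn : Nice n) : g (n+1) (xi (n+1)) = xi (n+1) := by
  have hxi := xi_mem_Icc hn
  rw [g_fixed_iff hn hxi]
  have hC : (0:ℝ) < 4^(n+1) := by positivity
  apply le_of_forall_pos_le_add
  intro ε hε
  set c := ε / (2 * 4^(n+1)) with hcdef
  have hc : 0 < c := by positivity
  have hlt : sInf (Tset n) < xi (n+1) + c := by
    rw [← xi_succ_eq]; linarith
  obtain ⟨t, htT, htlt⟩ := exists_lt_of_csInf_lt ⟨1, T_one hn⟩ hlt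
  have hxit : xi (n+1) ≤ t := by rw [xi_succ_eq]; exact csInf_le (T_bddBelow n) htT
  have ht1 : t ≤ 1 := htT.1.2
  have hspread := (g_fixed_iff hn htT.1).1 htT.2
  have hd : t - xi (n+1) ≤ c := by linarith
  have l1 : v n (xi (n+1)) - v n t ≤ 4^(n+1) * (t - xi (n+1)) := hn.lip hxi.1 hxit ht1
  have l2 : v n (1 - t) - v n (1 - xi (n+1)) ≤ 4^(n+1) * (t - xi (n+1)) := by
    have := hn.lip (by linarith : (0:ℝ) ≤ 1 - t) (by linarith : 1 - t ≤ 1 - xi (n+1))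
      (by linarith [hxi.1] : 1 - xi (n+1) ≤ 1)
    calc v n (1 - t) - v n (1 - xi (n+1)) ≤ 4^(n+1) * ((1 - xi (n+1)) - (1 - t)) := this
    _ = 4^(n+1) * (t - xi (n+1)) := by ring
  have key : 4^(n+1) * (t - xi (n+1)) ≤ ε / 2 := by
    calc (4:ℝ)^(n+1) * (t - xi (n+1)) ≤ 4^(n+1) * c :=
          mul_le_mul_of_nonneg_left hd (le_of_lt hC)
    _ = ε / 2 := by rw [hcdef]; field_simp
  linarith

lemma xi_fixed_iff {n : ℕ} (hn : Nice n) {y : ℝ} (hy : y ∈ Icc (0:ℝ) 1) :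
    g (n+1) y = y ↔ xi (n+1) ≤ y := by
  constructor
  · intro h
    rw [xi_succ_eq]
    exact csInf_le (T_bddBelow n) ⟨hy, h⟩
  · intro h
    exact (T_upclosed hn ⟨xi_mem_Icc hn, xi_fixed hn⟩ h hy.2).2

lemma xi_le_third {n : ℕ} (hn : Nice n) (hδU : v n (1/3) - v n (2/3) ≤ 1) :
    xi (n+1) ≤ 1/3 := by
  rw [xi_succ_eq]
  apply csInf_le (T_bddBelow n)
  have hmem : (1/3 : ℝ) ∈ Icc (0:ℝ) 1 := by constructor <;> norm_num
  refine ⟨hmem, (g_fixed_iff hn hmem).2 ?_⟩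
  rw [show (1:ℝ) - 1/3 = 2/3 by norm_num]
  linarith

lemma g_le_third {n : ℕ} (hn : Nice n) (hK : v n 0 - v n (2/3) ≤ 1) {y : ℝ}
    (hy0 : 0 ≤ y) (hy3 : y ≤ 1/3) : g (n+1) y ≤ 1/3 := by
  apply g_le_of_mem
  refine ⟨⟨hy3, by norm_num⟩, ?_⟩
  rw [show (1:ℝ) - 1/3 = 2/3 by norm_num]
  have := hn.mono (le_refl 0) hy0 (by linarith : y ≤ 1)
  linarith

lemma g_identity {n : ℕ} (hn : Nice n) (hxi : 0 < xi (n+1)) {y : ℝ} (hy0 : 0 ≤ y)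
    (hyxi : y ≤ xi (n+1)) : v n y = 1 + v n (1 - g (n+1) y) := by
  have hy1 : y ≤ 1 := le_trans hyxi (xi_mem_Icc hn).2
  have hymem : y ∈ Icc (0:ℝ) 1 := ⟨hy0, hy1⟩
  obtain ⟨⟨hyA, hA1⟩, hcond⟩ := g_mem hn hymem
  set A := g (n+1) y with hA
  have hC : (0:ℝ) < 4^(n+1) := by positivity
  refine le_antisymm hcond ?_
  rcases eq_or_lt_of_le hyA with he | hlt
  · -- A = y : then y = xi (n+1) and spread = 1 by left-continuity
    have hfix : g (n+1) y = y := he.symm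
    have hxiley : xi (n+1) ≤ y := (xi_fixed_iff hn hymem).1 hfix
    have hyeq : y = xi (n+1) := le_antisymm hyxi hxiley
    rw [← he]
    apply le_of_forall_pos_le_add
    intro ε hε
    set η := min y (ε / (2 * 4^(n+1))) with hη
    have hη0 : 0 < η := lt_min (by linarith) (by positivity)
    set y' := y - η / 2 with hy'
    have hy'0 : 0 ≤ y' := by
      have : η ≤ y := min_le_left _ _
      simp only [hy']; linarith
    have hy'y : y' < y := by simp only [hy']; linarith
    have hy'1 : y' ≤ 1 := by linarith
    have hnotfix : ¬ (g (n+1) y' = y') := by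
      rw [xi_fixed_iff hn ⟨hy'0, hy'1⟩]
      rw [hyeq] at hy'y
      linarith
    have hspread : 1 + v n (1 - y') < v n y' := by
      by_contra hcon
      push_neg at hcon
      exact hnotfix ((g_fixed_iff hn ⟨hy'0, hy'1⟩).2 hcon)
    have l1 : v n y' - v n y ≤ 4^(n+1) * (η / 2) := by
      have := hn.lip hy'0 (le_of_lt hy'y) hy1
      calc v n y' - v n y ≤ 4^(n+1) * (y - y') := this
      _ = 4^(n+1) * (η / 2) := by rw [hy']; ring_nf
    have l2 : v n (1 - y) - v n (1 - y') ≤ 4^(n+1) * (η / 2) := by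
      have := hn.lip (by linarith : (0:ℝ) ≤ 1 - y) (by linarith : 1 - y ≤ 1 - y')
        (by linarith : 1 - y' ≤ 1)
      calc v n (1 - y) - v n (1 - y') ≤ 4^(n+1) * ((1 - y') - (1 - y)) := this
      _ = 4^(n+1) * (η / 2) := by rw [hy']; ring_nf
    have hkey : 4^(n+1) * (η / 2) ≤ ε / 4 := by
      have h1 : η ≤ ε / (2 * 4^(n+1)) := min_le_right _ _
      have : 4^(n+1) * (η / 2) ≤ 4^(n+1) * (ε / (2 * 4^(n+1)) / 2) := by
        apply mul_le_mul_of_nonneg_left _ (le_of_lt hC)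
        linarith
      calc (4:ℝ)^(n+1) * (η / 2) ≤ 4^(n+1) * (ε / (2 * 4^(n+1)) / 2) := this
      _ = ε / 4 := by field_simp; ring
    linarith
  · -- y < A : left limit at A
    apply le_of_forall_pos_le_add
    intro ε hε
    set δ := min (A - y) (ε / 4^(n+1)) / 2 with hδ
    have hδ0 : 0 < δ := by
      apply div_pos _ (by norm_num)
      apply lt_min (by linarith) (by positivity)
    set x := A - δ with hx
    have hδA : δ < A - y := by
      have : min (A - y) (ε / 4^(n+1)) ≤ A - y := min_le_left _ _
      simp only [hδ]; linarith
    have hyx : y < x := by simp only [hx]; linarith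
    have hxA : x < A := by simp only [hx]; linarith
    have hnc := not_cond_of_lt_g hn hymem (le_of_lt hyx) hxA
    have l1 : v n (1 - A) - v n (1 - x) ≤ 4^(n+1) * δ := by
      have hx1 : x ≤ 1 := by linarith
      have h0A : (0:ℝ) ≤ 1 - A := by linarith
      have := hn.lip h0A (by linarith : 1 - A ≤ 1 - x) (by linarith [hy0] : 1 - x ≤ 1)
      calc v n (1 - A) - v n (1 - x) ≤ 4^(n+1) * ((1 - x) - (1 - A)) := this
      _ = 4^(n+1) * δ := by rw [hx]; ring_nf
    have hkey : 4^(n+1) * δ ≤ ε := by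
      have h1 : min (A - y) (ε / 4^(n+1)) ≤ ε / 4^(n+1) := min_le_right _ _
      have h2 : δ ≤ ε / 4^(n+1) / 2 := by simp only [hδ]; linarith
      have : 4^(n+1) * δ ≤ 4^(n+1) * (ε / 4^(n+1) / 2) :=
        mul_le_mul_of_nonneg_left h2 (le_of_lt hC)
      calc (4:ℝ)^(n+1) * δ ≤ 4^(n+1) * (ε / 4^(n+1) / 2) := this
      _ = ε / 2 := by field_simp
      _ ≤ ε := by linarith
    linarith

lemma g_anti {n : ℕ} (hn : Nice n)
    (hl3 : ∀ s t : ℝ, 2/3 ≤ s → s ≤ t → t ≤ 1 → t - s ≤ v n s - v n t)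
    (hK : v n 0 - v n (2/3) ≤ 1) (hδU : v n (1/3) - v n (2/3) ≤ 1)
    (hxi : 0 < xi (n+1)) {y z : ℝ} (hy0 : 0 ≤ y) (hyz : y ≤ z)
    (hz : z ≤ xi (n+1)) : g (n+1) z ≤ g (n+1) y := by
  by_contra hcon
  push_neg at hcon
  set a := g (n+1) y
  set b := g (n+1) z
  have hz0 : 0 ≤ z := le_trans hy0 hyz
  have hz1 : z ≤ 1 := le_trans hz (xi_mem_Icc hn).2
  have hiy := g_identity hn hxi hy0 (le_trans hyz hz)
  have hiz := g_identity hn hxi hz0 hz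
  have hy3 : y ≤ 1/3 := le_trans (le_trans hyz hz) (xi_le_third hn hδU)
  have hz3 : z ≤ 1/3 := le_trans hz (xi_le_third hn hδU)
  have ha3 : a ≤ 1/3 := g_le_third hn hK hy0 hy3
  have hb3 : b ≤ 1/3 := g_le_third hn hK hz0 hz3
  have hb1 : b ≤ 1 := by linarith
  have h3 := hl3 (1 - b) (1 - a) (by linarith) (by linarith) (by linarith [hy0, (g_mem hn ⟨hy0, by linarith⟩).1.1])
  have hmono : v n z ≤ v n y := hn.mono hy0 hyz hz1
  linarith

/-! ### The contraction inequality (TL) and increment bounds (LB/UB) -/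

lemma TL {n : ℕ} (hn : Nice n)
    (hl3 : ∀ s t : ℝ, 2/3 ≤ s → s ≤ t → t ≤ 1 → t - s ≤ v n s - v n t)
    (hK : v n 0 - v n (2/3) ≤ 1) (hδU : v n (1/3) - v n (2/3) ≤ 1)
    (hxi : 0 < xi (n+1)) {y z : ℝ} (hy0 : 0 ≤ y) (hyz : y ≤ z) (hz : z ≤ xi (n+1)) :
    v (n+1) y - v (n+1) z ≤ g (n+1) y * (v n y - v n z) := by
  have hz0 : 0 ≤ z := le_trans hy0 hyz
  have hz1 : z ≤ 1 := le_trans hz (xi_mem_Icc hn).2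
  have hy1 : y ≤ 1 := le_trans hyz hz1
  have hymem : y ∈ Icc (0:ℝ) 1 := ⟨hy0, hy1⟩
  have hzmem : z ∈ Icc (0:ℝ) 1 := ⟨hz0, hz1⟩
  obtain ⟨⟨hya, ha1⟩, hconda⟩ := g_mem hn hymem
  obtain ⟨⟨hzc, hc1⟩, hcondc⟩ := g_mem hn hzmem
  set a := g (n+1) y with hadef
  set c := g (n+1) z with hcdef
  have hca : c ≤ a := g_anti hn hl3 hK hδU hxi hy0 hyz hz
  have ha0 : 0 ≤ a := le_trans hy0 hya
  have hc0 : 0 ≤ c := le_trans hz0 hzc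
  have hamem : a ∈ Icc (0:ℝ) 1 := ⟨ha0, ha1⟩
  have hcmem : c ∈ Icc (0:ℝ) 1 := ⟨hc0, hc1⟩
  have h1amem : (1 - a) ∈ Icc (0:ℝ) 1 := ⟨by linarith, by linarith⟩
  have h1cmem : (1 - c) ∈ Icc (0:ℝ) 1 := ⟨by linarith, by linarith⟩
  have h0mem : (0:ℝ) ∈ Icc (0:ℝ) 1 := by constructor <;> norm_num
  have Ey := v_succ_split hn hymem
  have Ez := v_succ_split hn hzmem
  rw [← hadef] at Ey
  rw [← hcdef] at Ez
  -- the key signed integral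
  have key : (∫ x in c..a, (v n z - 1 - v n (1 - x))) ≤ 0 := by
    apply integral_nonpos_Ioo hca
    intro x hx
    have hcond := (cond_of_gt_g hn hzmem hx.1 (le_trans (le_of_lt hx.2) ha1)).2
    linarith
  have expand : (∫ x in c..a, (v n z - 1 - v n (1 - x)))
      = (a - c) * (v n z - 1) - ∫ x in c..a, v n (1 - x) := by
    rw [intervalIntegral.integral_sub intervalIntegrable_const (comp_sub_int hn hcmem hamem),
      intervalIntegral.integral_const, smul_eq_mul]
  have comp : (∫ x in c..a, v n (1 - x)) = ∫ u in (1-a)..(1-c), v n u :=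
    intervalIntegral.integral_comp_sub_left (v n) 1
  have subl : (∫ u in (0:ℝ)..(1-a), v n u) - ∫ u in (0:ℝ)..(1-c), v n u
      = ∫ u in (1-c)..(1-a), v n u :=
    intervalIntegral.integral_interval_sub_left (hn.intOn h0mem h1amem) (hn.intOn h0mem h1cmem)
  have symm : (∫ u in (1-c)..(1-a), v n u) = - ∫ u in (1-a)..(1-c), v n u :=
    intervalIntegral.integral_symm _ _
  have emul : g (n+1) y * (v n y - v n z) = a * v n y - a * v n z := by
    rw [← hadef]; ring
  have eexp : (a - c) * (v n z - 1) = a * v n z - c * v n z - a + c := by ring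
  linarith [Ey, Ez, key, expand, comp, subl, symm]

lemma LB {n : ℕ} (hn : Nice n) (hn1 : Nice (n+1)) {y : ℝ} (hy : y ∈ Icc (0:ℝ) 1) :
    g (n+1) y * (v (n+1) y - v n y)
      + ((∫ u in (0:ℝ)..(1 - g (n+1) y), v (n+1) u) - ∫ u in (0:ℝ)..(1 - g (n+1) y), v n u)
      ≤ v (n+2) y - v (n+1) y := by
  obtain ⟨⟨hyA, hA1⟩, hcondA⟩ := g_mem hn1 hy
  obtain ⟨⟨hyB, hB1⟩, hcondB⟩ := g_mem hn hy
  set A := g (n+2) y with hAdef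
  set B := g (n+1) y with hBdef
  have hA0 : 0 ≤ A := le_trans hy.1 hyA
  have hB0 : 0 ≤ B := le_trans hy.1 hyB
  have h1Amem : (1 - A) ∈ Icc (0:ℝ) 1 := ⟨by linarith, by linarith⟩
  have h1Bmem : (1 - B) ∈ Icc (0:ℝ) 1 := ⟨by linarith, by linarith⟩
  have h0mem : (0:ℝ) ∈ Icc (0:ℝ) 1 := by constructor <;> norm_num
  have hBmem : B ∈ Icc (0:ℝ) 1 := ⟨hB0, hB1⟩
  have hAmem : A ∈ Icc (0:ℝ) 1 := ⟨hA0, hA1⟩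
  have Ey2 := v_succ_split hn1 hy   -- v (n+2) y = A * v (n+1) y + (1-A) + ∫ v (n+1)
  have Ey1 := v_succ_split hn hy    -- v (n+1) y = B * v n y + (1-B) + ∫ v n
  rw [← hAdef] at Ey2
  rw [← hBdef] at Ey1
  -- signed integral J = ∫_B^A (v (n+1) y - 1 - v (n+1) (1-x)) dx ≥ 0
  have key : 0 ≤ ∫ x in B..A, (v (n+1) y - 1 - v (n+1) (1 - x)) := by
    rcases le_total B A with hBA | hAB
    · apply integral_nonneg_Ioo hBA
      intro x hx
      have := not_cond_of_lt_g hn1 hy (le_trans hyB (le_of_lt hx.1)) hx.2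
      linarith
    · rw [intervalIntegral.integral_symm]
      have : (∫ x in A..B, (v (n+1) y - 1 - v (n+1) (1 - x))) ≤ 0 := by
        apply integral_nonpos_Ioo hAB
        intro x hx
        have := (cond_of_gt_g hn1 hy hx.1 (le_trans (le_of_lt hx.2) hB1)).2
        linarith
      linarith
  have expand : (∫ x in B..A, (v (n+1) y - 1 - v (n+1) (1 - x)))
      = (A - B) * (v (n+1) y - 1) - ∫ x in B..A, v (n+1) (1 - x) := by
    rw [intervalIntegral.integral_sub intervalIntegrable_const (comp_sub_int hn1 hBmem hAmem),
      intervalIntegral.integral_const, smul_eq_mul]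
  have comp : (∫ x in B..A, v (n+1) (1 - x)) = ∫ u in (1-A)..(1-B), v (n+1) u :=
    intervalIntegral.integral_comp_sub_left (v (n+1)) 1
  have subl : (∫ u in (0:ℝ)..(1-A), v (n+1) u) - ∫ u in (0:ℝ)..(1-B), v (n+1) u
      = ∫ u in (1-B)..(1-A), v (n+1) u :=
    intervalIntegral.integral_interval_sub_left (hn1.intOn h0mem h1Amem) (hn1.intOn h0mem h1Bmem)
  have symm : (∫ u in (1-B)..(1-A), v (n+1) u) = - ∫ u in (1-A)..(1-B), v (n+1) u :=
    intervalIntegral.integral_symm _ _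
  have emul : B * (v (n+1) y - v n y) = B * v (n+1) y - B * v n y := by ring
  have eexp : (A - B) * (v (n+1) y - 1) = A * v (n+1) y - B * v (n+1) y - A + B := by ring
  linarith [Ey2, Ey1, key, expand, comp, subl, symm]

lemma UB {n : ℕ} (hn : Nice n) (hn1 : Nice (n+1)) {t : ℝ} (ht : t ∈ Icc (0:ℝ) 1) :
    v (n+2) t - v (n+1) t ≤ g (n+2) t * (v (n+1) t - v n t)
      + ((∫ u in (0:ℝ)..(1 - g (n+2) t), v (n+1) u) - ∫ u in (0:ℝ)..(1 - g (n+2) t), v n u) := by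
  obtain ⟨⟨htA, hA1⟩, hcondA⟩ := g_mem hn1 ht
  obtain ⟨⟨htB, hB1⟩, hcondB⟩ := g_mem hn ht
  set A := g (n+2) t with hAdef
  set B := g (n+1) t with hBdef
  have hA0 : 0 ≤ A := le_trans ht.1 htA
  have hB0 : 0 ≤ B := le_trans ht.1 htB
  have h1Amem : (1 - A) ∈ Icc (0:ℝ) 1 := ⟨by linarith, by linarith⟩
  have h1Bmem : (1 - B) ∈ Icc (0:ℝ) 1 := ⟨by linarith, by linarith⟩
  have h0mem : (0:ℝ) ∈ Icc (0:ℝ) 1 := by constructor <;> norm_num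
  have hBmem : B ∈ Icc (0:ℝ) 1 := ⟨hB0, hB1⟩
  have hAmem : A ∈ Icc (0:ℝ) 1 := ⟨hA0, hA1⟩
  have Ey2 := v_succ_split hn1 ht
  have Ey1 := v_succ_split hn ht
  rw [← hAdef] at Ey2
  rw [← hBdef] at Ey1
  -- signed integral J = ∫_B'..A' (v n (1-x) + 1 - v n t) dx ≥ 0
  have key : 0 ≤ ∫ x in B..A, (v n (1 - x) + 1 - v n t) := by
    rcases le_total B A with hBA | hAB
    · apply integral_nonneg_Ioo hBA
      intro x hx
      have := (cond_of_gt_g hn ht hx.1 (le_trans (le_of_lt hx.2) hA1)).2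
      linarith
    · rw [intervalIntegral.integral_symm]
      have : (∫ x in A..B, (v n (1 - x) + 1 - v n t)) ≤ 0 := by
        apply integral_nonpos_Ioo hAB
        intro x hx
        have := not_cond_of_lt_g hn ht (le_trans htA (le_of_lt hx.1)) hx.2
        linarith
      linarith
  have expand : (∫ x in B..A, (v n (1 - x) + 1 - v n t))
      = (∫ x in B..A, v n (1 - x)) + (A - B) * (1 - v n t) := by
    have : (∫ x in B..A, (v n (1 - x) + 1 - v n t))
        = (∫ x in B..A, v n (1 - x)) + ∫ _x in B..A, (1 - v n t) := by
      rw [← intervalIntegral.integral_add (comp_sub_int hn hBmem hAmem) intervalIntegrable_const]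
      congr 1
      ext x
      ring
    rw [this, intervalIntegral.integral_const, smul_eq_mul]
  have comp : (∫ x in B..A, v n (1 - x)) = ∫ u in (1-A)..(1-B), v n u :=
    intervalIntegral.integral_comp_sub_left (v n) 1
  have subl : (∫ u in (0:ℝ)..(1-A), v n u) - ∫ u in (0:ℝ)..(1-B), v n u
      = ∫ u in (1-B)..(1-A), v n u :=
    intervalIntegral.integral_interval_sub_left (hn.intOn h0mem h1Amem) (hn.intOn h0mem h1Bmem)
  have symm : (∫ u in (1-B)..(1-A), v n u) = - ∫ u in (1-A)..(1-B), v n u :=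
    intervalIntegral.integral_symm _ _
  have emul : A * (v (n+1) t - v n t) = A * v (n+1) t - A * v n t := by ring
  have eexp : (A - B) * (1 - v n t) = A - B - A * v n t + B * v n t := by ring
  linarith [Ey2, Ey1, key, expand, comp, subl, symm]

/-! ### Upper-region formula and basic successor properties -/

lemma v_succ_fixed {n : ℕ} (hn : Nice n) {w : ℝ} (hw : w ∈ Icc (0:ℝ) 1)
    (hfix : xi (n+1) ≤ w) :
    v (n+1) w = w * v n w + (1 - w) + ∫ u in (0:ℝ)..(1 - w), v n u := by
  have := v_succ_split hn hw
  rwa [(xi_fixed_iff hn hw).2 hfix] at this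

lemma mono_succ {n : ℕ} (hn : Nice n) {y z : ℝ} (hy0 : 0 ≤ y) (hyz : y ≤ z) (hz1 : z ≤ 1) :
    v (n+1) z ≤ v (n+1) y := by
  have hy1 : y ≤ 1 := le_trans hyz hz1
  have hymem : y ∈ Icc (0:ℝ) 1 := ⟨hy0, hy1⟩
  have hzmem : z ∈ Icc (0:ℝ) 1 := ⟨le_trans hy0 hyz, hz1⟩
  have h1mem : (1:ℝ) ∈ Icc (0:ℝ) 1 := by constructor <;> norm_num
  have hsplit : (∫ x in y..(1:ℝ), max (v n y) (1 + v n (1 - x)))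
      = (∫ x in y..z, max (v n y) (1 + v n (1 - x)))
        + ∫ x in z..(1:ℝ), max (v n y) (1 + v n (1 - x)) :=
    (intervalIntegral.integral_add_adjacent_intervals
      (maxF_int hn _ hymem hzmem) (maxF_int hn _ hzmem h1mem)).symm
  have hmonoyz : v n z ≤ v n y := hn.mono hy0 hyz hz1
  have h1 : (z - y) * v n y ≤ ∫ x in y..z, max (v n y) (1 + v n (1 - x)) := by
    have := intervalIntegral.integral_mono_on hyz (intervalIntegrable_const (c := v n y))
      (maxF_int hn _ hymem hzmem) (fun x _ => le_max_left _ _)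
    simpa using this
  have h2 : (∫ x in z..(1:ℝ), max (v n z) (1 + v n (1 - x)))
      ≤ ∫ x in z..(1:ℝ), max (v n y) (1 + v n (1 - x)) :=
    intervalIntegral.integral_mono_on hz1 (maxF_int hn _ hzmem h1mem)
      (maxF_int hn _ hzmem h1mem) (fun x _ => max_le_max hmonoyz (le_refl _))
  have h3 : z * v n z ≤ z * v n y :=
    mul_le_mul_of_nonneg_left hmonoyz (le_trans hy0 hyz)
  show z * v n z + _ ≤ y * v n y + _
  rw [hsplit]
  nlinarith [h1, h2, h3]

lemma nonneg_succ {n : ℕ} (hn : Nice n) {y : ℝ} (hy : y ∈ Icc (0:ℝ) 1) :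
    0 ≤ v (n+1) y := by
  have h1mem : (1:ℝ) ∈ Icc (0:ℝ) 1 := by constructor <;> norm_num
  have h1 : 0 ≤ y * v n y := mul_nonneg hy.1 (hn.nonneg hy.1 hy.2)
  have h2 : 0 ≤ ∫ x in y..(1:ℝ), max (v n y) (1 + v n (1 - x)) := by
    apply intervalIntegral.integral_nonneg hy.2
    intro x hx
    have : 0 ≤ v n (1 - x) := hn.nonneg (by linarith [hx.2]) (by linarith [hy.1, hx.1])
    have : (0:ℝ) ≤ 1 + v n (1 - x) := by linarith
    exact le_trans this (le_max_right _ _)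
  show 0 ≤ y * v n y + _
  linarith

lemma incNonneg_succ {n : ℕ} (hn : Nice n) (hn1 : Nice (n+1))
    (hprev : ∀ u ∈ Icc (0:ℝ) 1, v n u ≤ v (n+1) u) {y : ℝ} (hy : y ∈ Icc (0:ℝ) 1) :
    v (n+1) y ≤ v (n+2) y := by
  have h1mem : (1:ℝ) ∈ Icc (0:ℝ) 1 := by constructor <;> norm_num
  have h1 : y * v n y ≤ y * v (n+1) y :=
    mul_le_mul_of_nonneg_left (hprev y hy) hy.1
  have h2 : (∫ x in y..(1:ℝ), max (v n y) (1 + v n (1 - x)))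
      ≤ ∫ x in y..(1:ℝ), max (v (n+1) y) (1 + v (n+1) (1 - x)) := by
    apply intervalIntegral.integral_mono_on hy.2 (maxF_int hn _ hy h1mem)
      (maxF_int hn1 _ hy h1mem)
    intro x hx
    apply max_le_max (hprev y hy)
    have : v n (1 - x) ≤ v (n+1) (1 - x) :=
      hprev _ ⟨by linarith [hx.2], by linarith [hy.1, hx.1]⟩
    linarith
  show y * v n y + _ ≤ y * v (n+1) y + _
  linarith

lemma sup0_succ {n : ℕ} (hn : Nice n) (hsup : v n 0 ≤ n) : v (n+1) 0 ≤ n + 1 := by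
  have h1mem : (1:ℝ) ∈ Icc (0:ℝ) 1 := by constructor <;> norm_num
  have h0mem : (0:ℝ) ∈ Icc (0:ℝ) 1 := by constructor <;> norm_num
  have h2 : (∫ x in (0:ℝ)..(1:ℝ), max (v n 0) (1 + v n (1 - x)))
      ≤ ∫ _x in (0:ℝ)..(1:ℝ), (1 + v n 0) := by
    apply intervalIntegral.integral_mono_on (by norm_num) (maxF_int hn _ h0mem h1mem)
      intervalIntegrable_const
    intro x hx
    have hm : v n (1 - x) ≤ v n 0 := hn.mono (le_refl 0) (by linarith [hx.2]) (by linarith [hx.1])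
    have h0 : 0 ≤ v n 0 := hn.nonneg (le_refl 0) (by norm_num)
    apply max_le (by linarith) (by linarith)
  rw [intervalIntegral.integral_const, smul_eq_mul] at h2
  show (0:ℝ) * v n 0 + _ ≤ _
  push_cast
  linarith

lemma lip_succ {n : ℕ} (hn : Nice n) (hsup : v n 0 ≤ n) {y z : ℝ}
    (hy0 : 0 ≤ y) (hyz : y ≤ z) (hz1 : z ≤ 1) :
    v (n+1) y - v (n+1) z ≤ (4:ℝ)^(n+2) * (z - y) := by
  have hy1 : y ≤ 1 := le_trans hyz hz1
  have hymem : y ∈ Icc (0:ℝ) 1 := ⟨hy0, hy1⟩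
  have hzmem : z ∈ Icc (0:ℝ) 1 := ⟨le_trans hy0 hyz, hz1⟩
  have h1mem : (1:ℝ) ∈ Icc (0:ℝ) 1 := by constructor <;> norm_num
  have hsplit : (∫ x in y..(1:ℝ), max (v n y) (1 + v n (1 - x)))
      = (∫ x in y..z, max (v n y) (1 + v n (1 - x)))
        + ∫ x in z..(1:ℝ), max (v n y) (1 + v n (1 - x)) :=
    (intervalIntegral.integral_add_adjacent_intervals
      (maxF_int hn _ hymem hzmem) (maxF_int hn _ hzmem h1mem)).symm
  have hL := hn.lip hy0 hyz hz1
  have hmonoyz : v n z ≤ v n y := hn.mono hy0 hyz hz1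
  have hn0 : 0 ≤ v n 0 := hn.nonneg (le_refl 0) (by norm_num)
  have hy0v : v n y ≤ v n 0 := hn.mono (le_refl 0) hy0 hy1
  have hznn : 0 ≤ v n z := hn.nonneg hzmem.1 hz1
  -- middle integral bound
  have h1 : (∫ x in y..z, max (v n y) (1 + v n (1 - x))) ≤ (z - y) * (1 + v n 0) := by
    have := intervalIntegral.integral_mono_on
      (f := fun x => max (v n y) (1 + v n (1 - x))) (g := fun _ => 1 + v n 0)
      hyz (maxF_int hn _ hymem hzmem) (intervalIntegrable_const (c := 1 + v n 0))
      (fun x hx => by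
        show max (v n y) (1 + v n (1 - x)) ≤ 1 + v n 0
        have hm : v n (1 - x) ≤ v n 0 :=
          hn.mono (le_refl 0) (by linarith [hx.2, hz1]) (by linarith [hx.1, hy0])
        exact max_le (by linarith) (by linarith))
    rwa [intervalIntegral.integral_const, smul_eq_mul] at this
  -- tail integral difference bound
  have h2 : (∫ x in z..(1:ℝ), max (v n y) (1 + v n (1 - x)))
        - (∫ x in z..(1:ℝ), max (v n z) (1 + v n (1 - x)))
      ≤ (1 - z) * (4^(n+1) * (z - y)) := by
    have hdiff : (∫ x in z..(1:ℝ), max (v n y) (1 + v n (1 - x)))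
        - (∫ x in z..(1:ℝ), max (v n z) (1 + v n (1 - x)))
        = ∫ x in z..(1:ℝ), (max (v n y) (1 + v n (1 - x)) - max (v n z) (1 + v n (1 - x))) :=
      (intervalIntegral.integral_sub (maxF_int hn _ hzmem h1mem) (maxF_int hn _ hzmem h1mem)).symm
    rw [hdiff]
    have := intervalIntegral.integral_mono_on
      (f := fun x => max (v n y) (1 + v n (1 - x)) - max (v n z) (1 + v n (1 - x)))
      (g := fun _ => (4:ℝ)^(n+1) * (z - y))
      hz1 ((maxF_int hn _ hzmem h1mem).sub (maxF_int hn _ hzmem h1mem))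
      (intervalIntegrable_const (c := (4:ℝ)^(n+1) * (z - y)))
      (fun x _ => by
        show max (v n y) (1 + v n (1 - x)) - max (v n z) (1 + v n (1 - x)) ≤ 4^(n+1) * (z - y)
        have h0 : 0 ≤ v n y - v n z := by linarith
        have hle : max (v n y) (1 + v n (1-x))
            ≤ max (v n z) (1 + v n (1-x)) + (v n y - v n z) := by
          apply max_le
          · have := le_max_left (v n z) (1 + v n (1-x)); linarith
          · have := le_max_right (v n z) (1 + v n (1-x)); linarith
        linarith)
    rwa [intervalIntegral.integral_const, smul_eq_mul] at this
  have hcast : (n:ℝ) + 1 ≤ 4^(n+1) := by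
    have h := Nat.lt_pow_self (n := n+1) (by norm_num : 1 < 4)
    have : ((n+1 : ℕ) : ℝ) ≤ ((4^(n+1) : ℕ) : ℝ) := by exact_mod_cast Nat.le_of_lt h
    push_cast at this
    linarith
  have hyv : y * v n y - z * v n z ≤ 4^(n+1) * (z - y) + 0 := by
    have e1 : y * v n y - z * v n z = y * (v n y - v n z) - (z - y) * v n z := by ring
    have e2 : y * (v n y - v n z) ≤ 1 * (4^(n+1) * (z - y)) := by
      apply mul_le_mul hy1 hL (by linarith) (by norm_num)
    nlinarith [mul_nonneg (by linarith : (0:ℝ) ≤ z - y) hznn]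
  have hpow : (4:ℝ)^(n+2) = 4 * 4^(n+1) := by ring
  have hC : (0:ℝ) < 4^(n+1) := by positivity
  show y * v n y + _ - (z * v n z + _) ≤ _
  rw [hsplit, hpow]
  nlinarith [mul_nonneg (by linarith : (0:ℝ) ≤ z - y) (by linarith : (0:ℝ) ≤ 4^(n+1) - 1 - (n:ℝ)),
    mul_nonneg (by linarith : (0:ℝ) ≤ z) (by linarith : (0:ℝ) ≤ 4^(n+1) * (z - y))]

/-! ### Differences in the fixed region; l3, lip1, delta, K for the successor -/

lemma v_succ_fixed_diff {n : ℕ} (hn : Nice n) {w1 w2 : ℝ} (hw1 : w1 ∈ Icc (0:ℝ) 1)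
    (hw2 : w2 ∈ Icc (0:ℝ) 1) (h12 : w1 ≤ w2) (hfix1 : xi (n+1) ≤ w1) :
    v (n+1) w1 - v (n+1) w2 = w1 * v n w1 - w2 * v n w2 + (w2 - w1)
      + ∫ u in (1-w2)..(1-w1), v n u := by
  have h0mem : (0:ℝ) ∈ Icc (0:ℝ) 1 := by constructor <;> norm_num
  have h1w1 : (1 - w1) ∈ Icc (0:ℝ) 1 := ⟨by linarith [hw1.2], by linarith [hw1.1]⟩
  have h1w2 : (1 - w2) ∈ Icc (0:ℝ) 1 := ⟨by linarith [hw2.2], by linarith [hw2.1]⟩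
  have subl : (∫ u in (0:ℝ)..(1-w1), v n u) - ∫ u in (0:ℝ)..(1-w2), v n u
      = ∫ u in (1-w2)..(1-w1), v n u :=
    intervalIntegral.integral_interval_sub_left (hn.intOn h0mem h1w1) (hn.intOn h0mem h1w2)
  rw [v_succ_fixed hn hw1 hfix1, v_succ_fixed hn hw2 (le_trans hfix1 h12)]
  linarith [subl]

lemma l3_succ {n : ℕ} (hn : Nice n) (hδU : v n (1/3) - v n (2/3) ≤ 1) {s t : ℝ}
    (hs : 2/3 ≤ s) (hst : s ≤ t) (ht : t ≤ 1) : t - s ≤ v (n+1) s - v (n+1) t := by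
  have hsmem : s ∈ Icc (0:ℝ) 1 := ⟨by linarith, by linarith⟩
  have htmem : t ∈ Icc (0:ℝ) 1 := ⟨by linarith, ht⟩
  have hfix : xi (n+1) ≤ s := le_trans (xi_le_third hn hδU) (by linarith)
  have hdiff := v_succ_fixed_diff hn hsmem htmem hst hfix
  have hmono_st : v n t ≤ v n s := hn.mono hsmem.1 hst ht
  have h1t : (1 - t) ∈ Icc (0:ℝ) 1 := ⟨by linarith, by linarith [htmem.1]⟩
  have h1s : (1 - s) ∈ Icc (0:ℝ) 1 := ⟨by linarith, by linarith [hsmem.1]⟩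
  have hint : ((1-s) - (1-t)) * v n (1-s) ≤ ∫ u in (1-t)..(1-s), v n u := by
    apply le_integral_of_antitone (by linarith) (hn.intOn h1t h1s)
    intro x hx
    exact hn.mono (by linarith [hx.1, h1t.1]) hx.2 h1s.2
  have hcmp : v n t ≤ v n (1 - s) := hn.mono h1s.1 (by linarith) ht
  nlinarith [mul_nonneg (by linarith : (0:ℝ) ≤ s) (by linarith : (0:ℝ) ≤ v n s - v n t),
    mul_nonneg (by linarith : (0:ℝ) ≤ t - s) (by linarith : (0:ℝ) ≤ v n (1-s) - v n t)]

lemma lip1_low {n : ℕ} (hn : Nice n)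
    (hl3 : ∀ s t : ℝ, 2/3 ≤ s → s ≤ t → t ≤ 1 → t - s ≤ v n s - v n t)
    (hK : v n 0 - v n (2/3) ≤ 1) (hδU : v n (1/3) - v n (2/3) ≤ 1)
    (hlip1 : ∀ y z : ℝ, 0 ≤ y → y ≤ z → z ≤ 1/3 → v n y - v n z ≤ z - y)
    {y z : ℝ} (hy0 : 0 ≤ y) (hyz : y ≤ z) (hz : z ≤ xi (n+1)) :
    v (n+1) y - v (n+1) z ≤ (1/3) * (z - y) := by
  rcases lt_or_ge 0 (xi (n+1)) with hpos | hneg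
  · have hz3 : z ≤ 1/3 := le_trans hz (xi_le_third hn hδU)
    have hy3 : y ≤ 1/3 := le_trans hyz hz3
    have hTL := TL hn hl3 hK hδU hpos hy0 hyz hz
    have hg3 : g (n+1) y ≤ 1/3 := g_le_third hn hK hy0 hy3
    have hg0 : 0 ≤ g (n+1) y :=
      le_trans hy0 (g_mem hn ⟨hy0, by linarith⟩).1.1
    have hvd : v n y - v n z ≤ z - y := hlip1 y z hy0 hyz hz3
    have hvd0 : 0 ≤ v n y - v n z := by
      have := hn.mono hy0 hyz (by linarith : z ≤ 1); linarith
    calc v (n+1) y - v (n+1) z ≤ g (n+1) y * (v n y - v n z) := hTL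
    _ ≤ (1/3) * (z - y) := mul_le_mul hg3 hvd hvd0 (by norm_num)
  · have hz0 : z ≤ 0 := le_trans hz hneg
    have hyz0 : y = z := le_antisymm hyz (by linarith)
    rw [hyz0]
    simp

lemma lip1_high {n : ℕ} (hn : Nice n) (hδL : 1/3 ≤ v n (1/3) - v n (2/3))
    (hlip1 : ∀ y z : ℝ, 0 ≤ y → y ≤ z → z ≤ 1/3 → v n y - v n z ≤ z - y)
    {y z : ℝ} (hy0 : 0 ≤ y) (hyxi : xi (n+1) ≤ y) (hyz : y ≤ z) (hz3 : z ≤ 1/3) :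
    v (n+1) y - v (n+1) z ≤ z - y := by
  have hymem : y ∈ Icc (0:ℝ) 1 := ⟨hy0, by linarith⟩
  have hzmem : z ∈ Icc (0:ℝ) 1 := ⟨by linarith, by linarith⟩
  have hdiff := v_succ_fixed_diff hn hymem hzmem hyz hyxi
  have h1z : (1 - z) ∈ Icc (0:ℝ) 1 := ⟨by linarith, by linarith⟩
  have h1y : (1 - y) ∈ Icc (0:ℝ) 1 := ⟨by linarith, by linarith⟩
  have hvd : v n y - v n z ≤ z - y := hlip1 y z hy0 hyz hz3
  have hvd0 : 0 ≤ v n y - v n z := by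
    have := hn.mono hy0 hyz (by linarith : z ≤ 1); linarith
  have hy3 : y ≤ 1/3 := le_trans hyz hz3
  have hprod : y * (v n y - v n z) ≤ (1/3) * (z - y) :=
    mul_le_mul hy3 hvd hvd0 (by norm_num)
  have hint : (∫ u in (1-z)..(1-y), v n u) ≤ ((1-y) - (1-z)) * v n (1-z) := by
    apply integral_le_of_antitone (by linarith) (hn.intOn h1z h1y)
    intro x hx
    exact hn.mono h1z.1 hx.1 (le_trans hx.2 h1y.2)
  have hz13 : v n (1/3) ≤ v n z := hn.mono hzmem.1 hz3 (by norm_num)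
  have h1z23 : v n (1 - z) ≤ v n (2/3) := hn.mono (by norm_num) (by linarith) h1z.2
  nlinarith [mul_nonneg (by linarith : (0:ℝ) ≤ z - y)
    (by linarith : (0:ℝ) ≤ v n z - v n (1-z) - 1/3)]

lemma lip1_succ {n : ℕ} (hn : Nice n)
    (hl3 : ∀ s t : ℝ, 2/3 ≤ s → s ≤ t → t ≤ 1 → t - s ≤ v n s - v n t)
    (hK : v n 0 - v n (2/3) ≤ 1) (hδU : v n (1/3) - v n (2/3) ≤ 1)
    (hδL : 1/3 ≤ v n (1/3) - v n (2/3))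
    (hlip1 : ∀ y z : ℝ, 0 ≤ y → y ≤ z → z ≤ 1/3 → v n y - v n z ≤ z - y)
    {y z : ℝ} (hy0 : 0 ≤ y) (hyz : y ≤ z) (hz3 : z ≤ 1/3) :
    v (n+1) y - v (n+1) z ≤ z - y := by
  rcases le_total z (xi (n+1)) with hzxi | hxiz
  · have := lip1_low hn hl3 hK hδU hlip1 hy0 hyz hzxi
    linarith
  · rcases le_total y (xi (n+1)) with hyxi | hxiy
    · have hxi0 : 0 ≤ xi (n+1) := le_trans hy0 hyxi
      have h1 := lip1_low hn hl3 hK hδU hlip1 hy0 hyxi (le_refl _)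
      have h2 := lip1_high hn hδL hlip1 hxi0 (le_refl _) hxiz hz3
      linarith
    · exact lip1_high hn hδL hlip1 hy0 hxiy hyz hz3

lemma delta_succ {n : ℕ} (hn : Nice n) (hδL : 1/3 ≤ v n (1/3) - v n (2/3))
    (hδU : v n (1/3) - v n (2/3) ≤ 1) :
    1/3 ≤ v (n+1) (1/3) - v (n+1) (2/3) ∧ v (n+1) (1/3) - v (n+1) (2/3) ≤ 1 := by
  have h13 : (1/3 : ℝ) ∈ Icc (0:ℝ) 1 := by constructor <;> norm_num
  have h23 : (2/3 : ℝ) ∈ Icc (0:ℝ) 1 := by constructor <;> norm_num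
  have hdiff := v_succ_fixed_diff hn h13 h23 (by norm_num) (xi_le_third hn hδU)
  rw [show (1:ℝ) - 2/3 = 1/3 by norm_num, show (1:ℝ) - 1/3 = 2/3 by norm_num] at hdiff
  have hIu : (∫ u in (1/3 : ℝ)..(2/3 : ℝ), v n u) ≤ (2/3 - 1/3) * v n (1/3) := by
    apply integral_le_of_antitone (by norm_num) (hn.intOn h13 h23)
    intro x hx
    exact hn.mono h13.1 hx.1 (le_trans hx.2 h23.2)
  have hIl : ((2:ℝ)/3 - 1/3) * v n (2/3) ≤ ∫ u in (1/3 : ℝ)..(2/3 : ℝ), v n u := by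
    apply le_integral_of_antitone (by norm_num) (hn.intOn h13 h23)
    intro x hx
    exact hn.mono (by linarith [hx.1] : (0:ℝ) ≤ x) hx.2 h23.2
  constructor <;> nlinarith [hdiff, hIu, hIl]

lemma K_succ {n : ℕ} (hn : Nice n) (hK : v n 0 - v n (2/3) ≤ 1)
    (hδU : v n (1/3) - v n (2/3) ≤ 1) :
    v (n+1) 0 - v (n+1) (2/3) ≤ 1 := by
  have h0mem : (0:ℝ) ∈ Icc (0:ℝ) 1 := by constructor <;> norm_num
  have h13 : (1/3 : ℝ) ∈ Icc (0:ℝ) 1 := by constructor <;> norm_num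
  have h23 : (2/3 : ℝ) ∈ Icc (0:ℝ) 1 := by constructor <;> norm_num
  obtain ⟨⟨h0A, hA1⟩, hcond⟩ := g_mem hn h0mem
  set A := g (n+1) 0 with hAdef
  have hA3 : A ≤ 1/3 := g_le_third hn hK (le_refl 0) (by norm_num)
  have h1A : (1 - A) ∈ Icc (0:ℝ) 1 := ⟨by linarith, by linarith⟩
  have E0 := v_succ_split hn h0mem
  rw [← hAdef] at E0
  have E23 := v_succ_fixed hn h23 (le_trans (xi_le_third hn hδU) (by norm_num))
  rw [show (1:ℝ) - 2/3 = 1/3 by norm_num] at E23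
  have subl : (∫ u in (0:ℝ)..(1-A), v n u) - ∫ u in (0:ℝ)..(1/3 : ℝ), v n u
      = ∫ u in (1/3 : ℝ)..(1-A), v n u :=
    intervalIntegral.integral_interval_sub_left (hn.intOn h0mem h1A) (hn.intOn h0mem h13)
  have hsplit2 : (∫ u in (1/3 : ℝ)..(1-A), v n u)
      = (∫ u in (1/3 : ℝ)..(2/3 : ℝ), v n u) + ∫ u in (2/3 : ℝ)..(1-A), v n u :=
    (intervalIntegral.integral_add_adjacent_intervals (hn.intOn h13 h23)
      (hn.intOn h23 h1A)).symm
  have hI1 : (∫ u in (1/3 : ℝ)..(2/3 : ℝ), v n u) ≤ (2/3 - 1/3) * v n (1/3) := by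
    apply integral_le_of_antitone (by norm_num) (hn.intOn h13 h23)
    intro x hx
    exact hn.mono h13.1 hx.1 (le_trans hx.2 h23.2)
  have hI2 : (∫ u in (2/3 : ℝ)..(1-A), v n u) ≤ ((1-A) - 2/3) * v n (2/3) := by
    apply integral_le_of_antitone (by linarith) (hn.intOn h23 h1A)
    intro x hx
    exact hn.mono h23.1 hx.1 (le_trans hx.2 h1A.2)
  have hp1 : A * v n 0 ≤ A * (1 + v n (1 - A)) := mul_le_mul_of_nonneg_left hcond h0A
  have hp2 : A * v n (1 - A) ≤ A * v n (2/3) :=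
    mul_le_mul_of_nonneg_left (hn.mono h23.1 (by linarith) h1A.2) h0A
  nlinarith [hp1, hp2, hI1, hI2, subl, hsplit2, E0, E23]

/-! ### Successor steps for the increment comparisons GG / G2 / GR -/

lemma GG_succ {n : ℕ} (hn : Nice n) (hn1 : Nice (n+1))
    (hK : v n 0 - v n (2/3) ≤ 1)
    (hδU1 : v (n+1) (1/3) - v (n+1) (2/3) ≤ 1)
    (hGG : ∀ y t : ℝ, 0 ≤ y → y ≤ 1/3 → 1 - y ≤ t → t ≤ 1 →
      v (n+1) t - v n t ≤ v (n+1) y - v n y)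
    (hG2 : ∀ u t : ℝ, 1/3 ≤ u → u ≤ 2/3 → 2/3 ≤ t → t ≤ 1 →
      v (n+1) t - v n t ≤ v (n+1) u - v n u)
    (hGR : ∀ t1 t2 : ℝ, 2/3 ≤ t1 → t1 ≤ t2 → t2 ≤ 1 →
      v (n+1) t2 - v n t2 ≤ v (n+1) t1 - v n t1)
    {y t : ℝ} (hy0 : 0 ≤ y) (hy3 : y ≤ 1/3) (hty : 1 - y ≤ t) (ht1 : t ≤ 1) :
    v (n+2) t - v (n+1) t ≤ v (n+2) y - v (n+1) y := by
  have hymem : y ∈ Icc (0:ℝ) 1 := ⟨hy0, by linarith⟩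
  have ht23 : (2:ℝ)/3 ≤ t := by linarith
  have htmem : t ∈ Icc (0:ℝ) 1 := ⟨by linarith, ht1⟩
  obtain ⟨⟨hyB, hB1⟩, _⟩ := g_mem hn hymem
  set B := g (n+1) y with hBdef
  have hB0 : 0 ≤ B := le_trans hy0 hyB
  have hB3 : B ≤ 1/3 := g_le_third hn hK hy0 hy3
  have hfixt : g (n+2) t = t :=
    (xi_fixed_iff hn1 htmem).2 (le_trans (xi_le_third hn1 hδU1) (by linarith))
  have hLB := LB hn hn1 hymem
  have hUB := UB hn hn1 htmem
  rw [hfixt] at hUB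
  rw [← hBdef] at hLB
  have h0mem : (0:ℝ) ∈ Icc (0:ℝ) 1 := by constructor <;> norm_num
  have h1t : (1 - t) ∈ Icc (0:ℝ) 1 := ⟨by linarith, by linarith [htmem.1]⟩
  have h1B : (1 - B) ∈ Icc (0:ℝ) 1 := ⟨by linarith, by linarith⟩
  have h1t1B : 1 - t ≤ 1 - B := by linarith
  have sublφ : (∫ u in (0:ℝ)..(1-B), v (n+1) u) - ∫ u in (0:ℝ)..(1-t), v (n+1) u
      = ∫ u in (1-t)..(1-B), v (n+1) u :=
    intervalIntegral.integral_interval_sub_left (hn1.intOn h0mem h1B) (hn1.intOn h0mem h1t)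
  have sublψ : (∫ u in (0:ℝ)..(1-B), v n u) - ∫ u in (0:ℝ)..(1-t), v n u
      = ∫ u in (1-t)..(1-B), v n u :=
    intervalIntegral.integral_interval_sub_left (hn.intOn h0mem h1B) (hn.intOn h0mem h1t)
  have hsub : (∫ u in (1-t)..(1-B), v (n+1) u) - ∫ u in (1-t)..(1-B), v n u
      = ∫ u in (1-t)..(1-B), (v (n+1) u - v n u) :=
    (intervalIntegral.integral_sub (hn1.intOn h1t h1B) (hn.intOn h1t h1B)).symm
  have hIm : ((1-B) - (1-t)) * (v (n+1) t - v n t)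
      ≤ ∫ u in (1-t)..(1-B), (v (n+1) u - v n u) := by
    have := intervalIntegral.integral_mono_on
      (f := fun _ => v (n+1) t - v n t) (g := fun u => v (n+1) u - v n u)
      h1t1B intervalIntegrable_const ((hn1.intOn h1t h1B).sub (hn.intOn h1t h1B))
      (fun u hu => by
        show v (n+1) t - v n t ≤ v (n+1) u - v n u
        have hu0 : 0 ≤ u := le_trans h1t.1 hu.1
        rcases le_total u (1/3) with h13 | h13
        · exact hGG u t hu0 h13 (by linarith [hu.1]) ht1
        · rcases le_total u (2/3) with h23 | h23
          · exact hG2 u t h13 h23 ht23 ht1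
          · exact hGR u t h23 (le_trans hu.2 (by linarith : 1 - B ≤ t)) ht1)
    rwa [intervalIntegral.integral_const, smul_eq_mul] at this
  have hyt : v (n+1) t - v n t ≤ v (n+1) y - v n y := hGG y t hy0 hy3 hty ht1
  have hBy : B * (v (n+1) t - v n t) ≤ B * (v (n+1) y - v n y) :=
    mul_le_mul_of_nonneg_left hyt hB0
  have e : t * (v (n+1) t - v n t)
      = B * (v (n+1) t - v n t) + (t - B) * (v (n+1) t - v n t) := by ring
  have e2 : ((1-B) - (1-t)) * (v (n+1) t - v n t) = (t - B) * (v (n+1) t - v n t) := by ring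
  linarith [hLB, hUB, sublφ, sublψ, hsub, hIm, hBy, e, e2]

lemma G2_succ {n : ℕ} (hn : Nice n) (hn1 : Nice (n+1))
    (hδU : v n (1/3) - v n (2/3) ≤ 1)
    (hδU1 : v (n+1) (1/3) - v (n+1) (2/3) ≤ 1)
    (hGG : ∀ y t : ℝ, 0 ≤ y → y ≤ 1/3 → 1 - y ≤ t → t ≤ 1 →
      v (n+1) t - v n t ≤ v (n+1) y - v n y)
    (hG2 : ∀ u t : ℝ, 1/3 ≤ u → u ≤ 2/3 → 2/3 ≤ t → t ≤ 1 →
      v (n+1) t - v n t ≤ v (n+1) u - v n u)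
    {u t : ℝ} (hu13 : 1/3 ≤ u) (hu23 : u ≤ 2/3) (ht23 : 2/3 ≤ t) (ht1 : t ≤ 1) :
    v (n+2) t - v (n+1) t ≤ v (n+2) u - v (n+1) u := by
  have humem : u ∈ Icc (0:ℝ) 1 := ⟨by linarith, by linarith⟩
  have htmem : t ∈ Icc (0:ℝ) 1 := ⟨by linarith, ht1⟩
  have hut : u ≤ t := by linarith
  have hfixu : g (n+1) u = u :=
    (xi_fixed_iff hn humem).2 (le_trans (xi_le_third hn hδU) hu13)
  have hfixt : g (n+2) t = t :=
    (xi_fixed_iff hn1 htmem).2 (le_trans (xi_le_third hn1 hδU1) (by linarith))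
  have hLB := LB hn hn1 humem
  have hUB := UB hn hn1 htmem
  rw [hfixt] at hUB
  rw [hfixu] at hLB
  have h0mem : (0:ℝ) ∈ Icc (0:ℝ) 1 := by constructor <;> norm_num
  have h1t : (1 - t) ∈ Icc (0:ℝ) 1 := ⟨by linarith, by linarith [htmem.1]⟩
  have h1u : (1 - u) ∈ Icc (0:ℝ) 1 := ⟨by linarith, by linarith⟩
  have h1t1u : 1 - t ≤ 1 - u := by linarith
  have sublφ : (∫ w in (0:ℝ)..(1-u), v (n+1) w) - ∫ w in (0:ℝ)..(1-t), v (n+1) w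
      = ∫ w in (1-t)..(1-u), v (n+1) w :=
    intervalIntegral.integral_interval_sub_left (hn1.intOn h0mem h1u) (hn1.intOn h0mem h1t)
  have sublψ : (∫ w in (0:ℝ)..(1-u), v n w) - ∫ w in (0:ℝ)..(1-t), v n w
      = ∫ w in (1-t)..(1-u), v n w :=
    intervalIntegral.integral_interval_sub_left (hn.intOn h0mem h1u) (hn.intOn h0mem h1t)
  have hsub : (∫ w in (1-t)..(1-u), v (n+1) w) - ∫ w in (1-t)..(1-u), v n w
      = ∫ w in (1-t)..(1-u), (v (n+1) w - v n w) :=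
    (intervalIntegral.integral_sub (hn1.intOn h1t h1u) (hn.intOn h1t h1u)).symm
  have hIm : ((1-u) - (1-t)) * (v (n+1) t - v n t)
      ≤ ∫ w in (1-t)..(1-u), (v (n+1) w - v n w) := by
    have := intervalIntegral.integral_mono_on
      (f := fun _ => v (n+1) t - v n t) (g := fun w => v (n+1) w - v n w)
      h1t1u intervalIntegrable_const ((hn1.intOn h1t h1u).sub (hn.intOn h1t h1u))
      (fun w hw => by
        show v (n+1) t - v n t ≤ v (n+1) w - v n w
        have hw0 : 0 ≤ w := le_trans h1t.1 hw.1
        rcases le_total w (1/3) with h13 | h13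
        · exact hGG w t hw0 h13 (by linarith [hw.1]) ht1
        · exact hG2 w t h13 (by linarith [hw.2] : w ≤ 2/3) ht23 ht1)
    rwa [intervalIntegral.integral_const, smul_eq_mul] at this
  have hutv : v (n+1) t - v n t ≤ v (n+1) u - v n u := hG2 u t hu13 hu23 ht23 ht1
  have hBy : u * (v (n+1) t - v n t) ≤ u * (v (n+1) u - v n u) :=
    mul_le_mul_of_nonneg_left hutv humem.1
  have e : t * (v (n+1) t - v n t)
      = u * (v (n+1) t - v n t) + (t - u) * (v (n+1) t - v n t) := by ring
  have e2 : ((1-u) - (1-t)) * (v (n+1) t - v n t) = (t - u) * (v (n+1) t - v n t) := by ring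
  linarith [hLB, hUB, sublφ, sublψ, hsub, hIm, hBy, e, e2]

lemma GR_succ {n : ℕ} (hn : Nice n) (hn1 : Nice (n+1))
    (hδU : v n (1/3) - v n (2/3) ≤ 1)
    (hδU1 : v (n+1) (1/3) - v (n+1) (2/3) ≤ 1)
    (hGG : ∀ y t : ℝ, 0 ≤ y → y ≤ 1/3 → 1 - y ≤ t → t ≤ 1 →
      v (n+1) t - v n t ≤ v (n+1) y - v n y)
    (hGR : ∀ t1 t2 : ℝ, 2/3 ≤ t1 → t1 ≤ t2 → t2 ≤ 1 →
      v (n+1) t2 - v n t2 ≤ v (n+1) t1 - v n t1)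
    {t1 t2 : ℝ} (h23 : 2/3 ≤ t1) (h12 : t1 ≤ t2) (h21 : t2 ≤ 1) :
    v (n+2) t2 - v (n+1) t2 ≤ v (n+2) t1 - v (n+1) t1 := by
  have h1mem : t1 ∈ Icc (0:ℝ) 1 := ⟨by linarith, by linarith⟩
  have h2mem : t2 ∈ Icc (0:ℝ) 1 := ⟨by linarith, h21⟩
  have hfix1 : g (n+1) t1 = t1 :=
    (xi_fixed_iff hn h1mem).2 (le_trans (xi_le_third hn hδU) (by linarith))
  have hfix2 : g (n+2) t2 = t2 :=
    (xi_fixed_iff hn1 h2mem).2 (le_trans (xi_le_third hn1 hδU1) (by linarith))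
  have hLB := LB hn hn1 h1mem
  have hUB := UB hn hn1 h2mem
  rw [hfix2] at hUB
  rw [hfix1] at hLB
  have h0mem : (0:ℝ) ∈ Icc (0:ℝ) 1 := by constructor <;> norm_num
  have h1t2 : (1 - t2) ∈ Icc (0:ℝ) 1 := ⟨by linarith, by linarith [h2mem.1]⟩
  have h1t1 : (1 - t1) ∈ Icc (0:ℝ) 1 := ⟨by linarith, by linarith⟩
  have hle : 1 - t2 ≤ 1 - t1 := by linarith
  have sublφ : (∫ w in (0:ℝ)..(1-t1), v (n+1) w) - ∫ w in (0:ℝ)..(1-t2), v (n+1) w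
      = ∫ w in (1-t2)..(1-t1), v (n+1) w :=
    intervalIntegral.integral_interval_sub_left (hn1.intOn h0mem h1t1) (hn1.intOn h0mem h1t2)
  have sublψ : (∫ w in (0:ℝ)..(1-t1), v n w) - ∫ w in (0:ℝ)..(1-t2), v n w
      = ∫ w in (1-t2)..(1-t1), v n w :=
    intervalIntegral.integral_interval_sub_left (hn.intOn h0mem h1t1) (hn.intOn h0mem h1t2)
  have hsub : (∫ w in (1-t2)..(1-t1), v (n+1) w) - ∫ w in (1-t2)..(1-t1), v n w
      = ∫ w in (1-t2)..(1-t1), (v (n+1) w - v n w) :=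
    (intervalIntegral.integral_sub (hn1.intOn h1t2 h1t1) (hn.intOn h1t2 h1t1)).symm
  have hIm : ((1-t1) - (1-t2)) * (v (n+1) t2 - v n t2)
      ≤ ∫ w in (1-t2)..(1-t1), (v (n+1) w - v n w) := by
    have := intervalIntegral.integral_mono_on
      (f := fun _ => v (n+1) t2 - v n t2) (g := fun w => v (n+1) w - v n w)
      hle intervalIntegrable_const ((hn1.intOn h1t2 h1t1).sub (hn.intOn h1t2 h1t1))
      (fun w hw => by
        show v (n+1) t2 - v n t2 ≤ v (n+1) w - v n w
        have hw0 : 0 ≤ w := le_trans h1t2.1 hw.1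
        exact hGG w t2 hw0 (by linarith [hw.2]) (by linarith [hw.1]) h21)
    rwa [intervalIntegral.integral_const, smul_eq_mul] at this
  have h12v : v (n+1) t2 - v n t2 ≤ v (n+1) t1 - v n t1 := hGR t1 t2 h23 h12 h21
  have hBy : t1 * (v (n+1) t2 - v n t2) ≤ t1 * (v (n+1) t1 - v n t1) :=
    mul_le_mul_of_nonneg_left h12v h1mem.1
  have e : t2 * (v (n+1) t2 - v n t2)
      = t1 * (v (n+1) t2 - v n t2) + (t2 - t1) * (v (n+1) t2 - v n t2) := by ring
  have e2 : ((1-t1) - (1-t2)) * (v (n+1) t2 - v n t2)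
      = (t2 - t1) * (v (n+1) t2 - v n t2) := by ring
  linarith [hLB, hUB, sublφ, sublψ, hsub, hIm, hBy, e, e2]

/-! ### The induction package -/

lemma v_zero (y : ℝ) : v 0 y = 0 := rfl

lemma v_one (y : ℝ) : v 1 y = 1 - y := by
  show y * v 0 y + (∫ x in y..(1:ℝ), max (v 0 y) (1 + v 0 (1 - x))) = 1 - y
  have : (fun x : ℝ => max (v 0 y) (1 + v 0 (1 - x))) = fun _ : ℝ => (1:ℝ) := by
    funext x
    rw [v_zero, v_zero]
    norm_num
  rw [this, v_zero, intervalIntegral.integral_const, smul_eq_mul]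
  ring

/-- All the facts about levels `n+1` and `n` carried through the induction. -/
structure Pkg (n : ℕ) : Prop where
  nice : Nice (n+1)
  l3 : ∀ s t : ℝ, 2/3 ≤ s → s ≤ t → t ≤ 1 → t - s ≤ v (n+1) s - v (n+1) t
  lip1 : ∀ y z : ℝ, 0 ≤ y → y ≤ z → z ≤ 1/3 → v (n+1) y - v (n+1) z ≤ z - y
  deltaL : 1/3 ≤ v (n+1) (1/3) - v (n+1) (2/3)
  deltaU : v (n+1) (1/3) - v (n+1) (2/3) ≤ 1
  K : v (n+1) 0 - v (n+1) (2/3) ≤ 1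
  sup0 : v (n+1) 0 ≤ (n:ℝ) + 1
  GG : ∀ y t : ℝ, 0 ≤ y → y ≤ 1/3 → 1 - y ≤ t → t ≤ 1 →
    v (n+1) t - v n t ≤ v (n+1) y - v n y
  G2 : ∀ u t : ℝ, 1/3 ≤ u → u ≤ 2/3 → 2/3 ≤ t → t ≤ 1 →
    v (n+1) t - v n t ≤ v (n+1) u - v n u
  GR : ∀ t1 t2 : ℝ, 2/3 ≤ t1 → t1 ≤ t2 → t2 ≤ 1 →
    v (n+1) t2 - v n t2 ≤ v (n+1) t1 - v n t1

/-- The level-`n` facts needed by the step. -/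
def Lev (n : ℕ) : Prop :=
  Nice n ∧ (v n 0 - v n (2/3) ≤ 1) ∧ (v n (1/3) - v n (2/3) ≤ 1)

lemma lev0 : Lev 0 := by
  refine ⟨nice0, ?_, ?_⟩ <;> rw [v_zero, v_zero] <;> norm_num

lemma nice1 : Nice 1 := by
  refine ⟨?_, ?_, ?_⟩
  · intro y z _ h2 _; rw [v_one, v_one]; linarith
  · intro y _ h1; rw [v_one]; linarith
  · intro y z _ h2 _
    rw [v_one, v_one, show (4:ℝ)^(0+1+1) = 16 by norm_num]
    nlinarith

lemma pkg0 : Pkg 0 := by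
  refine ⟨nice1, ?_, ?_, ?_, ?_, ?_, ?_, ?_, ?_, ?_⟩
  · intro s t hs hst ht; rw [v_one, v_one]; linarith
  · intro y z h1 h2 h3; rw [v_one, v_one]; linarith
  · rw [v_one, v_one]; norm_num
  · rw [v_one, v_one]; norm_num
  · rw [v_one, v_one]; norm_num
  · rw [v_one]; norm_num
  · intro y t h1 h2 h3 h4; rw [v_one, v_one, v_zero, v_zero]; linarith
  · intro u t h1 h2 h3 h4; rw [v_one, v_one, v_zero, v_zero]; linarith
  · intro t1 t2 h1 h2 h3; rw [v_one, v_one, v_zero, v_zero]; linarith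

lemma pkg_step (n : ℕ) (hlev : Lev n) (hp : Pkg n) : Pkg (n+1) := by
  obtain ⟨hn, hKn, hδUn⟩ := hlev
  have hn1 : Nice (n+1) := hp.nice
  have hsup1 : v (n+1) 0 ≤ ((n+1 : ℕ) : ℝ) := by push_cast; exact_mod_cast hp.sup0
  have hn2 : Nice (n+2) := by
    refine ⟨?_, ?_, ?_⟩
    · intro y z h1 h2 h3; exact mono_succ hn1 h1 h2 h3
    · intro y h1 h2; exact nonneg_succ hn1 ⟨h1, h2⟩
    · intro y z h1 h2 h3; exact lip_succ hn1 hsup1 h1 h2 h3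
  refine ⟨hn2, ?_, ?_, ?_, ?_, ?_, ?_, ?_, ?_, ?_⟩
  · intro s t hs hst ht; exact l3_succ hn1 hp.deltaU hs hst ht
  · intro y z h1 h2 h3; exact lip1_succ hn1 hp.l3 hp.K hp.deltaU hp.deltaL hp.lip1 h1 h2 h3
  · exact (delta_succ hn1 hp.deltaL hp.deltaU).1
  · exact (delta_succ hn1 hp.deltaL hp.deltaU).2
  · exact K_succ hn1 hp.K hp.deltaU
  · have := sup0_succ hn1 hsup1; push_cast at this ⊢; linarith
  · intro y t h1 h2 h3 h4; exact GG_succ hn hn1 hKn hp.deltaU hp.GG hp.G2 hp.GR h1 h2 h3 h4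
  · intro u t h1 h2 h3 h4; exact G2_succ hn hn1 hδUn hp.deltaU hp.GG hp.G2 h1 h2 h3 h4
  · intro t1 t2 h1 h2 h3; exact GR_succ hn hn1 hδUn hp.deltaU hp.GG hp.GR h1 h2 h3

lemma pkg_all : ∀ n, Pkg n ∧ Lev n := by
  intro n
  induction n with
  | zero => exact ⟨pkg0, lev0⟩
  | succ n ih =>
      refine ⟨pkg_step n ih.2 ih.1, ih.1.nice, ih.1.K, ih.1.deltaU⟩

/-- Facts about a single level `j ≥ 1`, restated without the `n+1` pattern. -/
structure Facts (j : ℕ) : Prop where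
  nice : Nice j
  l3 : ∀ s t : ℝ, 2/3 ≤ s → s ≤ t → t ≤ 1 → t - s ≤ v j s - v j t
  lip1 : ∀ y z : ℝ, 0 ≤ y → y ≤ z → z ≤ 1/3 → v j y - v j z ≤ z - y
  deltaU : v j (1/3) - v j (2/3) ≤ 1
  K : v j 0 - v j (2/3) ≤ 1

lemma facts_all (j : ℕ) (hj : 1 ≤ j) : Facts j := by
  obtain ⟨j', rfl⟩ : ∃ j', j = j' + 1 := ⟨j - 1, by omega⟩
  obtain ⟨hp, _⟩ := pkg_all j'
  exact ⟨hp.nice, hp.l3, hp.lip1, hp.deltaU, hp.K⟩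

/-! ### Monotonicity of `ξ` -/

lemma xi_mono_succ (n : ℕ) : xi (n+1) ≤ xi (n+2) := by
  obtain ⟨hp, hn, hKn, hδUn⟩ := pkg_all n
  have hn1 : Nice (n+1) := hp.nice
  rw [xi_succ_eq, xi_succ_eq]
  apply csInf_le_csInf (T_bddBelow n) ⟨1, T_one hn1⟩
  intro w hw
  obtain ⟨hwmem, hwfix⟩ := hw
  refine ⟨hwmem, ?_⟩
  rw [g_fixed_iff hn hwmem]
  by_contra hcon
  push_neg at hcon
  have hnf : ¬ (g (n+1) w = w) := by
    rw [g_fixed_iff hn hwmem]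
    linarith
  have hwlt : w < xi (n+1) := by
    by_contra h
    push_neg at h
    exact hnf ((xi_fixed_iff hn hwmem).2 h)
  have hw3 : w ≤ 1/3 := le_trans (le_of_lt hwlt) (xi_le_third hn hδUn)
  have hGG := hp.GG w (1-w) hwmem.1 hw3 (le_refl _) (by linarith [hwmem.1])
  have hfix2 := (g_fixed_iff hn1 hwmem).1 hwfix
  linarith

lemma xi_chain {m j : ℕ} (hmj : m ≤ j) (hm : 1 ≤ m) : xi m ≤ xi j := by
  induction j, hmj using Nat.le_induction with
  | base => exact le_refl (xi m)
  | succ j hmj ih =>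
      have hj1 : 1 ≤ j := le_trans hm hmj
      obtain ⟨j', rfl⟩ : ∃ j', j = j' + 1 := ⟨j - 1, by omega⟩
      exact le_trans ih (xi_mono_succ j')

/-! ### Main theorem -/

lemma xi_one_nonpos : xi 1 ≤ 0 := by
  have hg10 : g 1 0 = 0 := by
    have hset : {x : ℝ | x ∈ Set.Icc (0:ℝ) 1 ∧ v (1-1) 0 ≤ 1 + v (1-1) (1 - x)}
        = Icc (0:ℝ) 1 := by
      ext x
      simp only [Set.mem_setOf_eq, show (1:ℕ)-1 = 0 from rfl, v_zero, and_iff_left_iff_imp]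
      intro _
      norm_num
    show sInf _ = 0
    rw [hset, csInf_Icc (by norm_num : (0:ℝ) ≤ 1)]
  apply csInf_le ⟨0, fun x hx => hx.1.1⟩
  exact ⟨⟨le_refl 0, by norm_num⟩, hg10⟩

lemma main_aux (m k : ℕ) (hm : 1 ≤ m) (hmk : m ≤ k) {y z : ℝ}
    (hy : y ∈ Icc (0:ℝ) (xi m)) (hz : z ∈ Icc (0:ℝ) (xi m)) (hyz : y ≤ z) :
    g k z ≤ g k y ∧ g k y - g k z ≤ (3:ℝ)^((m:ℤ) - (k:ℤ)) * (z - y) := by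
  rcases le_or_gt (xi m) 0 with hneg | hpos
  · have hy0 : y = 0 := le_antisymm (le_trans hy.2 hneg) hy.1
    have hz0 : z = 0 := le_antisymm (le_trans hz.2 hneg) hz.1
    rw [hy0, hz0]
    constructor
    · exact le_refl _
    · simp
  · have hm2 : 2 ≤ m := by
      by_contra h
      push_neg at h
      have hme : m = 1 := by omega
      rw [hme] at hpos
      linarith [xi_one_nonpos]
    obtain ⟨m', rfl⟩ : ∃ m', m = m' + 2 := ⟨m - 2, by omega⟩
    obtain ⟨d, rfl⟩ : ∃ d, k = (m' + 1 + d) + 1 := ⟨k - (m' + 2), by omega⟩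
    have hFq : Facts (m' + 1) := facts_all _ (by omega)
    have hxi3 : xi (m' + 2) ≤ 1/3 := xi_le_third hFq.nice hFq.deltaU
    have hy3 : y ≤ 1/3 := le_trans hy.2 hxi3
    have hz3 : z ≤ 1/3 := le_trans hz.2 hxi3
    have hy1 : y ≤ 1 := by linarith
    have hz1 : z ≤ 1 := by linarith
    have hz0 : 0 ≤ z := hz.1
    -- the contraction chain
    have chain : ∀ j, v (m' + 1 + j) y - v (m' + 1 + j) z
        ≤ (1/3)^j * (v (m' + 1) y - v (m' + 1) z) := by
      intro j
      induction j with
      | zero => norm_num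
      | succ j ih =>
          have hF : Facts (m' + 1 + j) := facts_all _ (by omega)
          have hxipos : 0 < xi (m' + 1 + j + 1) :=
            lt_of_lt_of_le hpos (xi_chain (by omega) (by omega))
          have hzxi : z ≤ xi (m' + 1 + j + 1) :=
            le_trans hz.2 (xi_chain (by omega) (by omega))
          have hTL := TL hF.nice hF.l3 hF.K hF.deltaU hxipos hy.1 hyz hzxi
          have hg3 : g (m' + 1 + j + 1) y ≤ 1/3 := g_le_third hF.nice hF.K hy.1 hy3
          have hd0 : 0 ≤ v (m' + 1 + j) y - v (m' + 1 + j) z := by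
            have := hF.nice.mono hy.1 hyz hz1
            linarith
          calc v (m' + 1 + (j+1)) y - v (m' + 1 + (j+1)) z
              ≤ g (m' + 1 + j + 1) y * (v (m' + 1 + j) y - v (m' + 1 + j) z) := hTL
          _ ≤ (1/3) * ((1/3)^j * (v (m' + 1) y - v (m' + 1) z)) :=
              mul_le_mul hg3 ih hd0 (by norm_num)
          _ = (1/3)^(j+1) * (v (m' + 1) y - v (m' + 1) z) := by ring
    -- final assembly at level k = (m'+1+d)+1
    have hFp : Facts (m' + 1 + d) := facts_all _ (by omega)
    have hxiposk : 0 < xi (m' + 1 + d + 1) :=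
      lt_of_lt_of_le hpos (xi_chain (by omega) (by omega))
    have hzxik : z ≤ xi (m' + 1 + d + 1) :=
      le_trans hz.2 (xi_chain (by omega) (by omega))
    have hyxik : y ≤ xi (m' + 1 + d + 1) := le_trans hyz hzxik
    have hanti : g (m' + 1 + d + 1) z ≤ g (m' + 1 + d + 1) y :=
      g_anti hFp.nice hFp.l3 hFp.K hFp.deltaU hxiposk hy.1 hyz hzxik
    refine ⟨hanti, ?_⟩
    set a := g (m' + 1 + d + 1) y with hadef
    set b := g (m' + 1 + d + 1) z with hbdef
    have hiy : v (m' + 1 + d) y = 1 + v (m' + 1 + d) (1 - a) :=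
      g_identity hFp.nice hxiposk hy.1 hyxik
    have hiz : v (m' + 1 + d) z = 1 + v (m' + 1 + d) (1 - b) :=
      g_identity hFp.nice hxiposk hz.1 hzxik
    have ha3 : a ≤ 1/3 := g_le_third hFp.nice hFp.K hy.1 hy3
    have hb0 : 0 ≤ b := le_trans hz.1 (g_mem hFp.nice ⟨hz.1, hz1⟩).1.1
    have hl3 := hFp.l3 (1 - a) (1 - b) (by linarith) (by linarith) (by linarith)
    have key2 : a - b ≤ v (m' + 1 + d) y - v (m' + 1 + d) z := by linarith
    have base : v (m' + 1) y - v (m' + 1) z ≤ z - y := hFq.lip1 y z hy.1 hyz hz3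
    have chainD := chain d
    have hcombine : a - b ≤ (1/3)^d * (z - y) := by
      have hM : (1/3 : ℝ)^d * (v (m' + 1) y - v (m' + 1) z) ≤ (1/3)^d * (z - y) :=
        mul_le_mul_of_nonneg_left base (by positivity)
      linarith
    have hzpow : (3:ℝ)^((((m' + 2) : ℕ):ℤ) - (((m' + 1 + d + 1) : ℕ):ℤ)) = (1/3 : ℝ)^d := by
      have he : (((m' + 2) : ℕ):ℤ) - (((m' + 1 + d + 1) : ℕ):ℤ) = -(d:ℤ) := by
        push_cast; ring
      rw [he, zpow_neg, zpow_natCast, one_div, inv_pow]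
    rw [hzpow]
    exact hcombine

/-- Geometric contraction of the thresholds on the pre-fixed-point region:
for `m ≥ 1`, `k ≥ m` and `y, z ∈ [0, ξ m]`,
`|g k y - g k z| ≤ 3 ^ (m - k) * |y - z|`. -/
theorem threshold_geometric_contraction :
    ∀ m : ℕ, 1 ≤ m → ∀ k : ℕ, m ≤ k →
      ∀ y ∈ Set.Icc (0:ℝ) (xi m), ∀ z ∈ Set.Icc (0:ℝ) (xi m),
        |g k y - g k z| ≤ (3:ℝ) ^ ((m : ℤ) - (k : ℤ)) * |y - z| := by
  intro m hm k hk y hy z hz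
  rcases le_total y z with h | h
  · obtain ⟨h1, h2⟩ := main_aux m k hm hk hy hz h
    rw [abs_of_nonneg (by linarith : (0:ℝ) ≤ g k y - g k z),
      abs_of_nonpos (by linarith : y - z ≤ 0), neg_sub]
    exact h2
  · obtain ⟨h1, h2⟩ := main_aux m k hm hk hz hy h
    rw [abs_of_nonpos (by linarith : g k y - g k z ≤ 0),
      abs_of_nonneg (by linarith : (0:ℝ) ≤ y - z), neg_sub]
    exact h2
end

section
/- Characterization of the limiting threshold: for every y ∈ [0,1], the sequence (g_k(y))_{k≥1} converges as k → ∞, and its limit equals max{ξ, y}. -/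
open MeasureTheory Set Filter

lemma v_succ (k : ℕ) (y : ℝ) :
    v (k+1) y = y * v k y + ∫ x in y..(1:ℝ), max (v k y) (1 + v k (1 - x)) := rfl

lemma g_succ (k : ℕ) (y : ℝ) :
    g (k+1) y = sInf {x : ℝ | x ∈ Set.Icc y 1 ∧ v k y ≤ 1 + v k (1 - x)} := by
  simp [g]

/-- Bundle of inductive facts about `v k` on `[0,1]`. -/
def Pack (k : ℕ) : Prop :=
  (∀ a b : ℝ, 0 ≤ a → a ≤ b → b ≤ 1 → v k b ≤ v k a) ∧
  (∀ y : ℝ, 0 ≤ y → y ≤ 1 → 0 ≤ v k y ∧ v k y ≤ k) ∧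
  (∀ a b : ℝ, 0 ≤ a → a ≤ b → b ≤ 1 → v k a - v k b ≤ (k:ℝ)^2 * (b - a)) ∧
  (∀ a b : ℝ, 0 ≤ a → a ≤ b → b ≤ 1/2 → v k a - v k b ≤ 1) ∧
  (v k (1/3) - v k (2/3) ≤ 1)

lemma Pack.mono {k : ℕ} (h : Pack k) :
    ∀ a b : ℝ, 0 ≤ a → a ≤ b → b ≤ 1 → v k b ≤ v k a := h.1

lemma Pack.nonneg {k : ℕ} (h : Pack k) : ∀ y : ℝ, 0 ≤ y → y ≤ 1 → 0 ≤ v k y :=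
  fun y h0 h1 => (h.2.1 y h0 h1).1

lemma Pack.bound {k : ℕ} (h : Pack k) : ∀ y : ℝ, 0 ≤ y → y ≤ 1 → v k y ≤ k :=
  fun y h0 h1 => (h.2.1 y h0 h1).2

lemma Pack.lip {k : ℕ} (h : Pack k) :
    ∀ a b : ℝ, 0 ≤ a → a ≤ b → b ≤ 1 → v k a - v k b ≤ (k:ℝ)^2 * (b - a) := h.2.2.1

lemma Pack.half {k : ℕ} (h : Pack k) :
    ∀ a b : ℝ, 0 ≤ a → a ≤ b → b ≤ 1/2 → v k a - v k b ≤ 1 := h.2.2.2.1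

lemma Pack.third {k : ℕ} (h : Pack k) : v k (1/3) - v k (2/3) ≤ 1 := h.2.2.2.2

lemma Pack.contOn {k : ℕ} (h : Pack k) : ContinuousOn (v k) (Icc 0 1) := by
  have key : LipschitzOnWith ⟨(k:ℝ)^2, by positivity⟩ (v k) (Icc 0 1) := by
    apply LipschitzOnWith.of_dist_le_mul
    intro x hx y hy
    rcases le_total x y with hxy | hxy
    · have h1 := h.mono x y hx.1 hxy hy.2
      have h2 := h.lip x y hx.1 hxy hy.2
      rw [Real.dist_eq, Real.dist_eq, abs_of_nonneg (by linarith), abs_of_nonpos (by linarith)]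
      show _ ≤ (k:ℝ)^2 * _
      nlinarith
    · have h1 := h.mono y x hy.1 hxy hx.2
      have h2 := h.lip y x hy.1 hxy hx.2
      rw [Real.dist_eq, Real.dist_eq, abs_of_nonpos (by linarith), abs_of_nonneg (by linarith)]
      show _ ≤ (k:ℝ)^2 * _
      nlinarith
  exact key.continuousOn

lemma contOn_comp {k : ℕ} (h : Pack k) {α β : ℝ} (hα : 0 ≤ α) (hβ : β ≤ 1) :
    ContinuousOn (fun x : ℝ => v k (1 - x)) (Icc α β) := by
  apply h.contOn.comp (continuousOn_const.sub continuousOn_id)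
  intro x hx
  exact ⟨by simp; linarith [hx.2], by simp; linarith [hx.1]⟩

lemma integrable_max {k : ℕ} (h : Pack k) {c α β : ℝ} (hα : 0 ≤ α) (hαβ : α ≤ β) (hβ : β ≤ 1) :
    IntervalIntegrable (fun x => max c (1 + v k (1 - x))) volume α β := by
  apply ContinuousOn.intervalIntegrable
  rw [uIcc_of_le hαβ]
  exact continuousOn_const.sup (continuousOn_const.add (contOn_comp h hα hβ))

lemma integrable_shift {k : ℕ} (h : Pack k) {α β : ℝ} (hα : 0 ≤ α) (hαβ : α ≤ β) (hβ : β ≤ 1) :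
    IntervalIntegrable (fun x => v k (1 - x)) volume α β := by
  apply ContinuousOn.intervalIntegrable
  rw [uIcc_of_le hαβ]
  exact contOn_comp h hα hβ

lemma integrable_self {k : ℕ} (h : Pack k) {α β : ℝ} (hα : 0 ≤ α) (hαβ : α ≤ β) (hβ : β ≤ 1) :
    IntervalIntegrable (v k) volume α β := by
  apply ContinuousOn.intervalIntegrable
  rw [uIcc_of_le hαβ]
  exact h.contOn.mono (Icc_subset_Icc hα hβ)

lemma gprops {k : ℕ} (h : Pack k) {y : ℝ} (hy : y ∈ Icc (0:ℝ) 1) :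
    g (k+1) y ∈ Icc y 1 ∧ v k y ≤ 1 + v k (1 - g (k+1) y) ∧
      (∀ x, x ∈ Icc y 1 → v k y ≤ 1 + v k (1-x) → g (k+1) y ≤ x) := by
  obtain ⟨hy0, hy1⟩ := hy
  have hne : ({x : ℝ | x ∈ Set.Icc y 1 ∧ v k y ≤ 1 + v k (1 - x)}).Nonempty := by
    refine ⟨1, ⟨⟨hy1, le_refl 1⟩, ?_⟩⟩
    have h1 : v k y ≤ v k 0 := h.mono 0 y le_rfl hy0 hy1
    have h2 : (0:ℝ) ≤ v k 0 := h.nonneg 0 le_rfl zero_le_one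
    simp only [sub_self]
    linarith
  have hbdd : BddBelow {x : ℝ | x ∈ Set.Icc y 1 ∧ v k y ≤ 1 + v k (1 - x)} :=
    ⟨y, fun x hx => hx.1.1⟩
  have hclosed : IsClosed {x : ℝ | x ∈ Set.Icc y 1 ∧ v k y ≤ 1 + v k (1 - x)} := by
    have heq : {x : ℝ | x ∈ Set.Icc y 1 ∧ v k y ≤ 1 + v k (1 - x)}
        = Icc y 1 ∩ (fun x => v k y - v k (1 - x)) ⁻¹' Iic 1 := by
      ext x
      simp only [Set.mem_setOf_eq, Set.mem_inter_iff, Set.mem_preimage, Set.mem_Iic]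
      constructor
      · rintro ⟨h1, h2⟩; exact ⟨h1, by linarith⟩
      · rintro ⟨h1, h2⟩; exact ⟨h1, by linarith⟩
    rw [heq]
    exact ContinuousOn.preimage_isClosed_of_isClosed
      (continuousOn_const.sub (contOn_comp h hy0 le_rfl)) isClosed_Icc isClosed_Iic
  have hmem := hclosed.csInf_mem hne hbdd
  rw [g_succ]
  exact ⟨hmem.1, hmem.2, fun x hx hcond => csInf_le hbdd ⟨hx, hcond⟩⟩

lemma xiprops {k : ℕ} (h : Pack k) :
    xi (k+1) ∈ Icc (0:ℝ) 1 ∧ v k (xi (k+1)) ≤ 1 + v k (1 - xi (k+1)) ∧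
      (∀ t, t ∈ Icc (0:ℝ) 1 → v k t ≤ 1 + v k (1-t) → xi (k+1) ≤ t) := by
  have hsets : {y : ℝ | y ∈ Set.Icc (0:ℝ) 1 ∧ g (k+1) y = y}
      = {t : ℝ | t ∈ Set.Icc (0:ℝ) 1 ∧ v k t ≤ 1 + v k (1 - t)} := by
    ext t
    simp only [Set.mem_setOf_eq, and_congr_right_iff]
    intro ht
    obtain ⟨hmem, hcond, hle⟩ := gprops h ht
    constructor
    · intro he; rw [he] at hcond; exact hcond
    · intro hc; exact le_antisymm (hle t ⟨le_rfl, ht.2⟩ hc) hmem.1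
  have hxi : xi (k+1) = sInf {t : ℝ | t ∈ Set.Icc (0:ℝ) 1 ∧ v k t ≤ 1 + v k (1 - t)} := by
    rw [xi, hsets]
  have hne : ({t : ℝ | t ∈ Set.Icc (0:ℝ) 1 ∧ v k t ≤ 1 + v k (1 - t)}).Nonempty := by
    refine ⟨1, ⟨⟨zero_le_one, le_rfl⟩, ?_⟩⟩
    have h1 : v k 1 ≤ v k 0 := h.mono 0 1 le_rfl zero_le_one le_rfl
    simp only [sub_self]
    linarith
  have hbdd : BddBelow {t : ℝ | t ∈ Set.Icc (0:ℝ) 1 ∧ v k t ≤ 1 + v k (1 - t)} :=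
    ⟨0, fun t ht => ht.1.1⟩
  have hclosed : IsClosed {t : ℝ | t ∈ Set.Icc (0:ℝ) 1 ∧ v k t ≤ 1 + v k (1 - t)} := by
    have heq : {t : ℝ | t ∈ Set.Icc (0:ℝ) 1 ∧ v k t ≤ 1 + v k (1 - t)}
        = Icc (0:ℝ) 1 ∩ (fun t => v k t - v k (1 - t)) ⁻¹' Iic 1 := by
      ext t
      simp only [Set.mem_setOf_eq, Set.mem_inter_iff, Set.mem_preimage, Set.mem_Iic]
      constructor
      · rintro ⟨h1, h2⟩; exact ⟨h1, by linarith⟩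
      · rintro ⟨h1, h2⟩; exact ⟨h1, by linarith⟩
    rw [heq]
    exact ContinuousOn.preimage_isClosed_of_isClosed
      (h.contOn.sub (contOn_comp h le_rfl le_rfl)) isClosed_Icc isClosed_Iic
  have hmem := hclosed.csInf_mem hne hbdd
  rw [← hxi] at hmem
  refine ⟨hmem.1, hmem.2, fun t ht hc => ?_⟩
  rw [hxi]
  exact csInf_le hbdd ⟨ht, hc⟩

lemma xi_le_third_s13 {k : ℕ} (h : Pack k) : xi (k+1) ≤ 1/3 := by
  apply (xiprops h).2.2 (1/3) ⟨by norm_num, by norm_num⟩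
  have := h.third
  norm_num
  linarith

lemma xi_le_g {k : ℕ} (h : Pack k) {y : ℝ} (hy : y ∈ Icc (0:ℝ) 1) :
    xi (k+1) ≤ g (k+1) y := by
  obtain ⟨hmem, hcond, _⟩ := gprops h hy
  apply (xiprops h).2.2 _ ⟨le_trans hy.1 hmem.1, hmem.2⟩
  have hm : v k (g (k+1) y) ≤ v k y := h.mono y _ hy.1 hmem.1 hmem.2
  linarith

lemma g_eq_self {k : ℕ} (h : Pack k) {y : ℝ} (hy : y ∈ Icc (0:ℝ) 1)
    (hc : v k y ≤ 1 + v k (1 - y)) : g (k+1) y = y := by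
  obtain ⟨hmem, _, hle⟩ := gprops h hy
  exact le_antisymm (hle y ⟨le_rfl, hy.2⟩ hc) hmem.1

lemma decomp {k : ℕ} (h : Pack k) {a b : ℝ} (ha : 0 ≤ a) (hab : a ≤ b) (hb : b ≤ 1) :
    v (k+1) a - v (k+1) b
      = a * v k a - b * v k b + (∫ x in a..b, max (v k a) (1 + v k (1-x)))
        + ∫ x in b..1, (max (v k a) (1 + v k (1-x)) - max (v k b) (1 + v k (1-x))) := by
  have hia : IntervalIntegrable (fun x => max (v k a) (1 + v k (1-x))) volume a b :=
    integrable_max h ha hab hb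
  have hia2 : IntervalIntegrable (fun x => max (v k a) (1 + v k (1-x))) volume b 1 :=
    integrable_max h (le_trans ha hab) hb le_rfl
  have hib : IntervalIntegrable (fun x => max (v k b) (1 + v k (1-x))) volume b 1 :=
    integrable_max h (le_trans ha hab) hb le_rfl
  have e1 : (∫ x in a..b, max (v k a) (1 + v k (1-x)))
      + ∫ x in b..1, max (v k a) (1 + v k (1-x))
      = ∫ x in a..(1:ℝ), max (v k a) (1 + v k (1-x)) :=
    intervalIntegral.integral_add_adjacent_intervals hia hia2
  have e2 : ∫ x in b..1, (max (v k a) (1 + v k (1-x)) - max (v k b) (1 + v k (1-x)))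
      = (∫ x in b..1, max (v k a) (1 + v k (1-x)))
        - ∫ x in b..1, max (v k b) (1 + v k (1-x)) :=
    intervalIntegral.integral_sub hia2 hib
  rw [v_succ, v_succ, e2, ← e1]
  ring

lemma step_mono {k : ℕ} (h : Pack k) {a b : ℝ} (ha : 0 ≤ a) (hab : a ≤ b) (hb : b ≤ 1) :
    v (k+1) b ≤ v (k+1) a := by
  have hd := decomp h ha hab hb
  have hAB : v k b ≤ v k a := h.mono a b ha hab hb
  have hB0 : 0 ≤ v k b := h.nonneg b (le_trans ha hab) hb
  have i1 : (b - a) * v k b ≤ ∫ x in a..b, max (v k a) (1 + v k (1-x)) := by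
    have := intervalIntegral.integral_mono_on hab intervalIntegrable_const
      (integrable_max h ha hab hb) (fun x _ => le_trans hAB (le_max_left _ _))
    simpa using this
  have i2 : 0 ≤ ∫ x in b..1,
      (max (v k a) (1 + v k (1-x)) - max (v k b) (1 + v k (1-x))) := by
    apply intervalIntegral.integral_nonneg hb
    intro u _
    have := max_le_max hAB (le_refl (1 + v k (1-u)))
    linarith
  nlinarith [mul_nonneg ha (sub_nonneg.2 hAB)]

lemma step_bounds {k : ℕ} (h : Pack k) {y : ℝ} (h0 : 0 ≤ y) (h1 : y ≤ 1) :
    0 ≤ v (k+1) y ∧ v (k+1) y ≤ ((k:ℝ)+1) := by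
  have hA0 : 0 ≤ v k y := h.nonneg y h0 h1
  have hAk : v k y ≤ k := h.bound y h0 h1
  constructor
  · rw [v_succ]
    have i : 0 ≤ ∫ x in y..1, max (v k y) (1 + v k (1-x)) := by
      apply intervalIntegral.integral_nonneg h1
      intro u _
      exact le_trans hA0 (le_max_left _ _)
    nlinarith
  · rw [v_succ]
    have ptw : ∀ x ∈ Icc y 1, max (v k y) (1 + v k (1-x)) ≤ 1 + (k:ℝ) := by
      intro x hx
      apply max_le (by linarith)
      have hx1 : v k (1 - x) ≤ k := h.bound (1-x) (by linarith [hx.2]) (by linarith [hx.1])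
      linarith
    have i := intervalIntegral.integral_mono_on h1 (integrable_max h h0 h1 le_rfl)
      intervalIntegrable_const ptw
    simp only [intervalIntegral.integral_const, smul_eq_mul] at i
    nlinarith [mul_le_mul_of_nonneg_left hAk h0]

lemma step_lip {k : ℕ} (h : Pack k) {a b : ℝ} (ha : 0 ≤ a) (hab : a ≤ b) (hb : b ≤ 1) :
    v (k+1) a - v (k+1) b ≤ ((k:ℝ)+1)^2 * (b - a) := by
  have hd := decomp h ha hab hb
  have hb0 : (0:ℝ) ≤ b := le_trans ha hab
  have ha1 : a ≤ 1 := le_trans hab hb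
  have hAB : v k b ≤ v k a := h.mono a b ha hab hb
  have hB0 : 0 ≤ v k b := h.nonneg b hb0 hb
  have hAk : v k a ≤ k := h.bound a ha ha1
  have hD := h.lip a b ha hab hb
  have i1 : (∫ x in a..b, max (v k a) (1 + v k (1-x))) ≤ (b - a) * (1 + (k:ℝ)) := by
    have ptw : ∀ x ∈ Icc a b, max (v k a) (1 + v k (1-x)) ≤ 1 + (k:ℝ) := by
      intro x hx
      apply max_le (by linarith)
      have hx1 : v k (1 - x) ≤ k := h.bound (1-x) (by linarith [hx.2, hb]) (by linarith [hx.1])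
      linarith
    have := intervalIntegral.integral_mono_on hab (integrable_max h ha hab hb)
      intervalIntegrable_const ptw
    simp only [intervalIntegral.integral_const, smul_eq_mul] at this
    linarith
  have i2 : (∫ x in b..1,
      (max (v k a) (1 + v k (1-x)) - max (v k b) (1 + v k (1-x))))
      ≤ (1 - b) * (v k a - v k b) := by
    have ptw : ∀ x ∈ Icc b 1,
        max (v k a) (1 + v k (1-x)) - max (v k b) (1 + v k (1-x)) ≤ v k a - v k b := by
      intro x _
      have hle : max (v k a) (1 + v k (1-x))
          ≤ max (v k b) (1 + v k (1-x)) + (v k a - v k b) := by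
        apply max_le
        · linarith [le_max_left (v k b) (1 + v k (1-x))]
        · linarith [le_max_right (v k b) (1 + v k (1-x))]
      linarith
    have := intervalIntegral.integral_mono_on hb
      ((integrable_max h hb0 hb le_rfl).sub (integrable_max h hb0 hb le_rfl))
      intervalIntegrable_const ptw
    simp only [intervalIntegral.integral_const, smul_eq_mul] at this
    linarith
  nlinarith [mul_nonneg (sub_nonneg.2 hab) hB0, mul_nonneg (sub_nonneg.2 hb) (sub_nonneg.2 hAB),
    mul_nonneg (sub_nonneg.2 ha1) (sub_nonneg.2 hAB)]

lemma int_max_le_const {k : ℕ} (h : Pack k) {c α β : ℝ} (hα : 0 ≤ α) (hαβ : α ≤ β) (hβ : β ≤ 1)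
    (hptw : ∀ x, α ≤ x → x < β → max c (1 + v k (1-x)) = c) :
    (∫ x in α..β, max c (1 + v k (1-x))) ≤ (β - α) * c := by
  have hne : ∀ᵐ x ∂(volume.restrict (Icc α β)), x ≠ β := by
    apply ae_restrict_of_ae
    rw [ae_iff]
    have he : {x : ℝ | ¬ x ≠ β} = {β} := by ext x; simp
    rw [he]
    exact measure_singleton β
  have hmem : ∀ᵐ x ∂(volume.restrict (Icc α β)), x ∈ Icc α β :=
    ae_restrict_mem measurableSet_Icc
  have hle : (fun x => max c (1 + v k (1-x))) ≤ᵐ[volume.restrict (Icc α β)] (fun _ => c) := by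
    filter_upwards [hne, hmem] with x hx1 hx2
    rw [hptw x hx2.1 (lt_of_le_of_ne hx2.2 hx1)]
  have := intervalIntegral.integral_mono_ae_restrict hαβ (integrable_max h hα hαβ hβ)
    intervalIntegrable_const hle
  simpa using this

lemma unified {k : ℕ} (h : Pack k) {a b : ℝ} (ha : 0 ≤ a) (hab : a ≤ b) (hb : b ≤ 1) :
    v (k+1) a - v (k+1) b ≤ g (k+1) a * (v k a - v k b)
      + max 0 (b - g (k+1) a) * (1 - (v k b - v k (1-b))) := by
  have ha1 : a ≤ 1 := le_trans hab hb
  have hb0 : (0:ℝ) ≤ b := le_trans ha hab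
  obtain ⟨hrI, hrc, hrle⟩ := gprops h ⟨ha, ha1⟩
  set r := g (k+1) a with hrdef
  have hra : a ≤ r := hrI.1
  have hr1 : r ≤ 1 := hrI.2
  have hr0 : (0:ℝ) ≤ r := le_trans ha hra
  have hAB : v k b ≤ v k a := h.mono a b ha hab hb
  have hd := decomp h ha hab hb
  -- below r the max is the first branch
  have hMa : ∀ x, a ≤ x → x < r → max (v k a) (1 + v k (1-x)) = v k a := by
    intro x hax hxr
    apply max_eq_left
    by_contra hcon
    push_neg at hcon
    exact absurd (hrle x ⟨hax, le_trans (le_of_lt hxr) hr1⟩ (le_of_lt hcon)) (not_le.2 hxr)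
  -- at or above r the condition holds
  have hcond : ∀ x, r ≤ x → x ≤ 1 → v k a ≤ 1 + v k (1 - x) := by
    intro x hrx hx1
    have := h.mono (1-x) (1-r) (by linarith) (by linarith) (by linarith)
    linarith
  have hMa2 : ∀ x, r ≤ x → x ≤ 1 → max (v k a) (1 + v k (1-x)) = 1 + v k (1-x) :=
    fun x h1 h2 => max_eq_right (hcond x h1 h2)
  have hMb2 : ∀ x, r ≤ x → x ≤ 1 → max (v k b) (1 + v k (1-x)) = 1 + v k (1-x) :=
    fun x h1 h2 => max_eq_right (le_trans hAB (hcond x h1 h2))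
  rcases le_or_gt b r with hbr | hrb
  · -- case b ≤ r
    have hmax0 : max 0 (b - r) = 0 := max_eq_left (by linarith)
    have i1 : (∫ x in a..b, max (v k a) (1 + v k (1-x))) ≤ (b - a) * v k a :=
      int_max_le_const h ha hab hb (fun x h1 h2 => hMa x h1 (lt_of_lt_of_le h2 hbr))
    have i2 : (∫ x in b..1,
        (max (v k a) (1 + v k (1-x)) - max (v k b) (1 + v k (1-x))))
        ≤ (r - b) * (v k a - v k b) := by
      have hsplit : (∫ x in b..r,
          (max (v k a) (1 + v k (1-x)) - max (v k b) (1 + v k (1-x))))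
          + (∫ x in r..1,
          (max (v k a) (1 + v k (1-x)) - max (v k b) (1 + v k (1-x))))
          = ∫ x in b..1,
          (max (v k a) (1 + v k (1-x)) - max (v k b) (1 + v k (1-x))) :=
        intervalIntegral.integral_add_adjacent_intervals
          ((integrable_max h hb0 hbr hr1).sub (integrable_max h hb0 hbr hr1))
          ((integrable_max h hr0 hr1 le_rfl).sub (integrable_max h hr0 hr1 le_rfl))
      have j1 : (∫ x in b..r,
          (max (v k a) (1 + v k (1-x)) - max (v k b) (1 + v k (1-x))))
          ≤ (r - b) * (v k a - v k b) := by
        have ptw : ∀ x ∈ Icc b r,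
            max (v k a) (1 + v k (1-x)) - max (v k b) (1 + v k (1-x))
              ≤ v k a - v k b := by
          intro x _
          have hle : max (v k a) (1 + v k (1-x))
              ≤ max (v k b) (1 + v k (1-x)) + (v k a - v k b) := by
            apply max_le
            · linarith [le_max_left (v k b) (1 + v k (1-x))]
            · linarith [le_max_right (v k b) (1 + v k (1-x))]
          linarith
        have := intervalIntegral.integral_mono_on hbr
          ((integrable_max h hb0 hbr hr1).sub (integrable_max h hb0 hbr hr1))
          intervalIntegrable_const ptw
        simp only [intervalIntegral.integral_const, smul_eq_mul] at this
        linarith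
      have j2 : (∫ x in r..1,
          (max (v k a) (1 + v k (1-x)) - max (v k b) (1 + v k (1-x)))) ≤ 0 := by
        have ptw : ∀ x ∈ Icc r 1,
            max (v k a) (1 + v k (1-x)) - max (v k b) (1 + v k (1-x)) ≤ 0 := by
          intro x hx
          rw [hMa2 x hx.1 hx.2, hMb2 x hx.1 hx.2]
          simp
        have := intervalIntegral.integral_mono_on hr1
          ((integrable_max h hr0 hr1 le_rfl).sub (integrable_max h hr0 hr1 le_rfl))
          intervalIntegrable_const ptw
        simpa using this
      linarith
    rw [hmax0]
    nlinarith
  · -- case r < b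
    have hmax0 : max 0 (b - r) = b - r := max_eq_right (by linarith)
    have isplit : (∫ x in a..r, max (v k a) (1 + v k (1-x)))
        + (∫ x in r..b, max (v k a) (1 + v k (1-x)))
        = ∫ x in a..b, max (v k a) (1 + v k (1-x)) :=
      intervalIntegral.integral_add_adjacent_intervals
        (integrable_max h ha hra (by linarith))
        (integrable_max h hr0 (le_of_lt hrb) hb)
    have i1a : (∫ x in a..r, max (v k a) (1 + v k (1-x))) ≤ (r - a) * v k a :=
      int_max_le_const h ha hra (by linarith) (fun x h1 h2 => hMa x h1 h2)
    have i1b : (∫ x in r..b, max (v k a) (1 + v k (1-x)))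
        ≤ (b - r) * (1 + v k (1 - b)) := by
      have ptw : ∀ x ∈ Icc r b,
          max (v k a) (1 + v k (1-x)) ≤ 1 + v k (1 - b) := by
        intro x hx
        rw [hMa2 x hx.1 (le_trans hx.2 hb)]
        have := h.mono (1-b) (1-x) (by linarith) (by linarith [hx.2]) (by linarith [hx.1])
        linarith
      have := intervalIntegral.integral_mono_on (le_of_lt hrb)
        (integrable_max h hr0 (le_of_lt hrb) hb) intervalIntegrable_const ptw
      simp only [intervalIntegral.integral_const, smul_eq_mul] at this
      linarith
    have i2 : (∫ x in b..1,
        (max (v k a) (1 + v k (1-x)) - max (v k b) (1 + v k (1-x)))) ≤ 0 := by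
      have ptw : ∀ x ∈ Icc b 1,
          max (v k a) (1 + v k (1-x)) - max (v k b) (1 + v k (1-x)) ≤ 0 := by
        intro x hx
        rw [hMa2 x (le_trans (le_of_lt hrb) hx.1) hx.2,
          hMb2 x (le_trans (le_of_lt hrb) hx.1) hx.2]
        simp
      have := intervalIntegral.integral_mono_on hb
        ((integrable_max h hb0 hb le_rfl).sub (integrable_max h hb0 hb le_rfl))
        intervalIntegrable_const ptw
      simpa using this
    rw [hmax0]
    nlinarith [isplit, i1a, i1b, i2, hd]

lemma step_half {k : ℕ} (h : Pack k) {a b : ℝ} (ha : 0 ≤ a) (hab : a ≤ b) (hb : b ≤ 1/2) :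
    v (k+1) a - v (k+1) b ≤ 1 := by
  have hb1 : b ≤ 1 := by linarith
  have hb0 : (0:ℝ) ≤ b := le_trans ha hab
  have hu := unified h ha hab hb1
  obtain ⟨hrI, hrc, hrle⟩ := gprops h ⟨ha, by linarith⟩
  have hr0 : (0:ℝ) ≤ g (k+1) a := le_trans ha hrI.1
  have hrhalf : g (k+1) a ≤ 1/2 := by
    apply hrle (1/2) ⟨by linarith, by norm_num⟩
    have h2 : (1:ℝ) - 1/2 = 1/2 := by norm_num
    rw [h2]
    have := h.half a (1/2) ha (by linarith) le_rfl
    linarith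
  have hD0 : 0 ≤ v k a - v k b := sub_nonneg.2 (h.mono a b ha hab hb1)
  have hD1 : v k a - v k b ≤ 1 := h.half a b ha hab hb
  have hphi : 0 ≤ v k b - v k (1-b) :=
    sub_nonneg.2 (h.mono b (1-b) hb0 (by linarith) (by linarith))
  rcases le_or_gt b (g (k+1) a) with hbr | hrb
  · have hmax0 : max 0 (b - g (k+1) a) = 0 := max_eq_left (by linarith)
    rw [hmax0] at hu
    nlinarith [hrI.2]
  · have hmax0 : max 0 (b - g (k+1) a) = b - g (k+1) a := max_eq_right (by linarith)
    rw [hmax0] at hu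
    nlinarith [mul_le_mul_of_nonneg_left (show 1 - (v k b - v k (1-b)) ≤ 1 by linarith)
      (show (0:ℝ) ≤ b - g (k+1) a by linarith)]

lemma eval_second {k : ℕ} (h : Pack k) {c : ℝ} (hc0 : 0 ≤ c) (hc1 : c ≤ 1)
    (hcond : ∀ x, c ≤ x → x ≤ 1 → v k c ≤ 1 + v k (1-x)) :
    v (k+1) c = c * v k c + ((1 - c) + ∫ x in c..1, v k (1-x)) := by
  rw [v_succ]
  have e : ∫ x in c..(1:ℝ), max (v k c) (1 + v k (1-x))
      = ∫ x in c..(1:ℝ), (1 + v k (1-x)) := by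
    apply intervalIntegral.integral_congr
    intro x hx
    rw [uIcc_of_le hc1] at hx
    exact max_eq_right (hcond x hx.1 hx.2)
  rw [e]
  have e2 : ∫ x in c..(1:ℝ), (1 + v k (1-x))
      = (1 - c) + ∫ x in c..1, v k (1-x) := by
    rw [intervalIntegral.integral_add intervalIntegrable_const
      (integrable_shift h hc0 hc1 le_rfl)]
    simp
  rw [e2]

lemma step_third {k : ℕ} (h : Pack k) :
    v (k+1) (1/3) - v (k+1) (2/3) ≤ 1 := by
  have hA := h.third
  have hc13 : ∀ x, (1:ℝ)/3 ≤ x → x ≤ 1 → v k (1/3) ≤ 1 + v k (1-x) := by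
    intro x h1 h2
    have := h.mono (1-x) (2/3) (by linarith) (by linarith) (by norm_num)
    linarith
  have hc23 : ∀ x, (2:ℝ)/3 ≤ x → x ≤ 1 → v k (2/3) ≤ 1 + v k (1-x) := by
    intro x h1 h2
    have hm : v k (2/3) ≤ v k (1/3) := h.mono (1/3) (2/3) (by norm_num) (by norm_num) (by norm_num)
    have := hc13 x (by linarith) h2
    linarith
  have e1 := eval_second h (by norm_num : (0:ℝ) ≤ 1/3) (by norm_num) hc13
  have e2 := eval_second h (by norm_num : (0:ℝ) ≤ 2/3) (by norm_num) hc23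
  have isplit : (∫ x in (1/3 : ℝ)..(2/3), v k (1-x))
      + (∫ x in (2/3 : ℝ)..1, v k (1-x)) = ∫ x in (1/3 : ℝ)..1, v k (1-x) :=
    intervalIntegral.integral_add_adjacent_intervals
      (integrable_shift h (by norm_num) (by norm_num) (by norm_num))
      (integrable_shift h (by norm_num) (by norm_num) le_rfl)
  have irefl : (∫ x in (1/3 : ℝ)..(2/3), v k (1-x))
      = ∫ x in (1/3 : ℝ)..(2/3), v k x := by
    have := intervalIntegral.integral_comp_sub_left (a := (1/3:ℝ)) (b := (2/3:ℝ)) (v k) 1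
    norm_num at this
    convert this using 2 <;> norm_num
  have ibound : (∫ x in (1/3 : ℝ)..(2/3), v k x) ≤ (1/3) * v k (1/3) := by
    have ptw : ∀ x ∈ Icc (1/3 : ℝ) (2/3), v k x ≤ v k (1/3) := by
      intro x hx
      exact h.mono (1/3) x (by norm_num) hx.1 (le_trans hx.2 (by norm_num))
    have := intervalIntegral.integral_mono_on (by norm_num : (1/3:ℝ) ≤ 2/3)
      (integrable_self h (by norm_num) (by norm_num) (by norm_num))
      intervalIntegrable_const ptw
    simp only [intervalIntegral.integral_const, smul_eq_mul] at this
    linarith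
  rw [e1, e2]
  rw [← isplit] at *
  rw [irefl] at *
  nlinarith

lemma pack : ∀ k, Pack k := by
  intro k
  induction k with
  | zero =>
    refine ⟨?_, ?_, ?_, ?_, ?_⟩ <;> simp [v_zero]
  | succ k ih =>
    refine ⟨fun a b ha hab hb => step_mono ih ha hab hb,
      fun y h0 h1 => ?_, fun a b ha hab hb => ?_,
      fun a b ha hab hb => step_half ih ha hab hb, step_third ih⟩
    · have := step_bounds ih h0 h1
      push_cast
      exact this
    · have := step_lip ih ha hab hb
      push_cast
      exact this

lemma vslope {k : ℕ} (h : Pack k) {a b : ℝ} (ha : 1/2 ≤ a) (hab : a ≤ b) (hb : b ≤ 1) :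
    b - a ≤ v (k+1) a - v (k+1) b := by
  have ha0 : (0:ℝ) ≤ a := by linarith
  have hb0 : (0:ℝ) ≤ b := by linarith
  have hconda : ∀ x, a ≤ x → x ≤ 1 → v k a ≤ 1 + v k (1-x) := by
    intro x h1 h2
    have := h.mono (1-x) a (by linarith) (by linarith) (by linarith)
    linarith
  have hcondb : ∀ x, b ≤ x → x ≤ 1 → v k b ≤ 1 + v k (1-x) := by
    intro x h1 h2
    have := h.mono (1-x) b (by linarith) (by linarith) hb
    linarith
  have e1 := eval_second h ha0 (le_trans hab hb) hconda
  have e2 := eval_second h hb0 hb hcondb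
  have isplit : (∫ x in a..b, v k (1-x)) + (∫ x in b..1, v k (1-x))
      = ∫ x in a..1, v k (1-x) :=
    intervalIntegral.integral_add_adjacent_intervals
      (integrable_shift h ha0 hab hb) (integrable_shift h hb0 hb le_rfl)
  have ibound : (b - a) * v k b ≤ ∫ x in a..b, v k (1-x) := by
    have ptw : ∀ x ∈ Icc a b, v k b ≤ v k (1-x) := by
      intro x hx
      exact h.mono (1-x) b (by linarith [hx.2]) (by linarith [hx.1]) hb
    have := intervalIntegral.integral_mono_on hab intervalIntegrable_const
      (integrable_shift h ha0 hab hb) ptw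
    simp only [intervalIntegral.integral_const, smul_eq_mul] at this
    linarith
  have hAB : v k b ≤ v k a := h.mono a b ha0 hab hb
  nlinarith [mul_nonneg ha0 (sub_nonneg.2 hAB)]

lemma flat_step {k : ℕ} (h : Pack k) {a b : ℝ} (ha : 0 ≤ a) (hab : a ≤ b) (hb : b ≤ 1/2) :
    v (k+1) a - v (k+1) b ≤ (1/2) * (v k a - v k b) + max 0 (b - xi (k+1)) := by
  have hb1 : b ≤ 1 := by linarith
  have hu := unified h ha hab hb1
  obtain ⟨hrI, hrc, hrle⟩ := gprops h ⟨ha, by linarith⟩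
  have hr0 : (0:ℝ) ≤ g (k+1) a := le_trans ha hrI.1
  have hrhalf : g (k+1) a ≤ 1/2 := by
    apply hrle (1/2) ⟨by linarith, by norm_num⟩
    have h2 : (1:ℝ) - 1/2 = 1/2 := by norm_num
    rw [h2]
    have := h.half a (1/2) ha (by linarith) le_rfl
    linarith
  have hxir : xi (k+1) ≤ g (k+1) a := xi_le_g h ⟨ha, by linarith⟩
  have hD0 : 0 ≤ v k a - v k b := sub_nonneg.2 (h.mono a b ha hab hb1)
  have hphi : 0 ≤ v k b - v k (1-b) :=
    sub_nonneg.2 (h.mono b (1-b) (le_trans ha hab) (by linarith) (by linarith))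
  have hmaxnn : (0:ℝ) ≤ max 0 (b - xi (k+1)) := le_max_left _ _
  rcases le_or_gt b (g (k+1) a) with hbr | hrb
  · have hmax0 : max 0 (b - g (k+1) a) = 0 := max_eq_left (by linarith)
    rw [hmax0] at hu
    nlinarith
  · have hmax0 : max 0 (b - g (k+1) a) = b - g (k+1) a := max_eq_right (by linarith)
    rw [hmax0] at hu
    have h1 : (b - g (k+1) a) * (1 - (v k b - v k (1-b))) ≤ b - xi (k+1) := by
      have e1 : (b - g (k+1) a) * (1 - (v k b - v k (1-b)))
          ≤ (b - g (k+1) a) * 1 :=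
        mul_le_mul_of_nonneg_left (by linarith) (by linarith)
      have e2 : b - g (k+1) a ≤ b - xi (k+1) := by linarith
      linarith
    have h2 : b - xi (k+1) ≤ max 0 (b - xi (k+1)) := le_max_right _ _
    nlinarith

lemma flat_chain {K : ℕ} {a p η : ℝ} (ha : 0 ≤ a) (hap : a ≤ p) (hp2 : p ≤ 1/2)
    (hη : 0 ≤ η) (hxic : ∀ j, K ≤ j → p - xi (j+1) ≤ η) :
    ∀ k, K ≤ k → v k a - v k p ≤ (1/2)^(k - K) + 2*η := by
  refine Nat.le_induction ?_ ?_
  · have := (pack K).half a p ha hap hp2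
    simp only [Nat.sub_self, pow_zero]
    linarith
  · intro k hk ih
    have hstep := flat_step (pack k) ha hap hp2
    have hmax : max 0 (p - xi (k+1)) ≤ η := max_le hη (hxic k hk)
    have hpow : ((1:ℝ)/2)^(k+1-K) = (1/2) * (1/2)^(k-K) := by
      have he : k+1-K = (k-K)+1 := by omega
      rw [he, pow_succ]
      ring
    rw [hpow]
    nlinarith

/-- Characterization of the limiting threshold: if `ξ` is the limit of the
minimal fixed points `ξ k`, then for every `y ∈ [0,1]` the thresholds `g k y`
converge to `max ξ y` as `k → ∞`. -/
theorem threshold_limit (ξ : ℝ) (hξ : Tendsto xi atTop (nhds ξ)) :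
    ∀ y : ℝ, y ∈ Set.Icc (0:ℝ) 1 →
      Tendsto (fun k : ℕ => g k y) atTop (nhds (max ξ y)) := by
  have hxi3 : ∀ k : ℕ, xi (k+1) ≤ 1/3 := fun k => xi_le_third_s13 (pack k)
  have hxi0 : ∀ k : ℕ, 0 ≤ xi (k+1) := fun k => ((xiprops (pack k)).1).1
  have hξ3 : ξ ≤ 1/3 := by
    apply le_of_tendsto hξ
    filter_upwards [eventually_gt_atTop 0] with k hk
    obtain ⟨m, rfl⟩ : ∃ m, k = m+1 := ⟨k-1, by omega⟩
    exact hxi3 m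
  have hξ0 : 0 ≤ ξ := by
    apply ge_of_tendsto hξ
    filter_upwards [eventually_gt_atTop 0] with k hk
    obtain ⟨m, rfl⟩ : ∃ m, k = m+1 := ⟨k-1, by omega⟩
    exact hxi0 m
  intro y hy
  obtain ⟨hy0, hy1⟩ := hy
  rcases le_or_gt y ξ with hyξ | hyξ
  · rw [max_eq_left hyξ]
    rw [Metric.tendsto_atTop]
    intro ε hε
    obtain ⟨δ, hδdef⟩ : ∃ d : ℝ, d = min ε (1/12) := ⟨_, rfl⟩
    have hδ0 : 0 < δ := hδdef ▸ lt_min hε (by norm_num)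
    have hδε : δ ≤ ε := hδdef ▸ min_le_left _ _
    have hδ12 : δ ≤ 1/12 := hδdef ▸ min_le_right _ _
    obtain ⟨N₁, hN₁⟩ := (Metric.tendsto_atTop.1 hξ) (δ/16) (by linarith)
    obtain ⟨n, hn⟩ := exists_pow_lt_of_lt_one (show (0:ℝ) < δ/8 by linarith)
      (show (1:ℝ)/2 < 1 by norm_num)
    refine ⟨N₁ + n + 2, fun k hk => ?_⟩
    obtain ⟨m, rfl⟩ : ∃ m, k = m + 1 := ⟨k - 1, by omega⟩
    obtain ⟨m', hm'⟩ : ∃ m', m = m' + 1 := ⟨m - 1, by omega⟩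
    have hxiB : ∀ j, N₁ ≤ j → |xi j - ξ| < δ/16 := by
      intro j hj
      have := hN₁ j hj
      rwa [Real.dist_eq] at this
    obtain ⟨p, hpdef⟩ : ∃ t : ℝ, t = ξ + δ/8 := ⟨_, rfl⟩
    obtain ⟨q, hqdef⟩ : ∃ t : ℝ, t = ξ + (3/4)*δ := ⟨_, rfl⟩
    have hchain := flat_chain (K := N₁) (a := y) (p := p) (η := (3/16)*δ) hy0
      (by linarith) (by linarith) (by linarith)
      (fun j hj => by
        have h1 := abs_lt.1 (hxiB (j+1) (by omega))
        linarith [h1.1])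
      m (by omega)
    have hpow : ((1:ℝ)/2)^(m - N₁) ≤ (1/2)^n :=
      pow_le_pow_of_le_one (by norm_num) (by norm_num) (by omega)
    have hDyp : v m y - v m p ≤ δ/2 := by linarith
    have hxim := xiprops (pack m)
    have hxik1 := abs_lt.1 (hxiB (m+1) (by omega))
    have hxile : xi (m+1) ≤ p := by linarith [hxik1.2]
    have hphi : v m p - v m (1-p) ≤ 1 := by
      have h1 : v m p ≤ v m (xi (m+1)) :=
        (pack m).mono (xi (m+1)) p (hxi0 m) hxile (by linarith)
      have h2 : v m (1 - xi (m+1)) ≤ v m (1-p) :=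
        (pack m).mono (1-p) (1-xi (m+1)) (by linarith) (by linarith)
          (by linarith [hxi0 m])
      linarith [hxim.2.1]
    have hslope : q - p ≤ v m (1-q) - v m (1-p) := by
      have hs := vslope (pack m') (a := 1-q) (b := 1-p)
        (by linarith) (by linarith) (by linarith)
      rw [← hm'] at hs
      linarith
    have hkey : v m y ≤ 1 + v m (1-q) := by linarith
    obtain ⟨hgI, _, hgle⟩ := gprops (pack m) (⟨hy0, hy1⟩ : y ∈ Icc (0:ℝ) 1)
    have hgub : g (m+1) y ≤ q := hgle q ⟨by linarith, by linarith⟩ hkey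
    have hglb : xi (m+1) ≤ g (m+1) y := xi_le_g (pack m) ⟨hy0, hy1⟩
    rw [Real.dist_eq, abs_lt]
    constructor
    · linarith [hxik1.1]
    · linarith
  · rw [max_eq_right (le_of_lt hyξ)]
    have hev : ∀ᶠ k in atTop, (fun _ : ℕ => y) k = g k y := by
      obtain ⟨N, hN⟩ := (Metric.tendsto_atTop.1 hξ) (y - ξ) (by linarith)
      rw [eventually_atTop]
      refine ⟨N + 1, fun k hk => ?_⟩
      obtain ⟨m, rfl⟩ : ∃ m, k = m + 1 := ⟨k - 1, by omega⟩
      have hd := hN (m+1) (by omega)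
      rw [Real.dist_eq] at hd
      have hxiy : xi (m+1) ≤ y := by
        have := abs_lt.1 hd
        linarith [this.1]
      have hxim := xiprops (pack m)
      have h1 : v m y ≤ v m (xi (m+1)) :=
        (pack m).mono (xi (m+1)) y (hxi0 m) hxiy hy1
      have h2 : v m (1 - xi (m+1)) ≤ v m (1-y) :=
        (pack m).mono (1-y) (1-xi (m+1)) (by linarith) (by linarith)
          (by linarith [hxi0 m])
      have hcond : v m y ≤ 1 + v m (1-y) := by linarith [hxim.2.1]
      exact (g_eq_self (pack m) ⟨hy0, hy1⟩ hcond).symm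
    exact Tendsto.congr' hev tendsto_const_nhds
end
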